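/- arXiv:2212.14269 — 8 statements merged into one kernel-verified Lean document; each statement's English description precedes it below -/
import Mathlib

section
/- If φ : ℂ → ℂ is entire and ∫_ℂ |φ(z)|² e^{−|z|²} dx dy < ∞, then for every fixed x ∈ ℝ the restriction of φ to the vertical line x + iℝ is square integrable with respect to the measure e^{−y²} dy, i.e. ∫_ℝ e^{−y²} |φ(x + iy)|² dy < ∞. -/
/-!
For entire `f`, the mean value property of `f²` gives the sub-mean value inequality
`π r² |f(c)|² ≤ ∫_{B(c,r)} |f|²`. Applied to `g(z) = φ(z) e^{-w̄ z}`, for which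
`|g(z)|² = |φ(z)|² e^{-|z|²} e^{|z-w|² - |w|²}`, it bounds the weighted density
`F = |φ|² e^{-|·|²}` by its own integral over the unit ball: `π F(w) ≤ e ∫_{B(w,1)} F`.
Integrate this along the line `x + iℝ` and swap the integrals: a point of `ℂ` lies in
`B(x + iy, 1)` only for `y` in an interval of length `2`, so `π ∫ F(x + iy) dy ≤ 2e ∫_ℂ F`.
Finally `e^{-y²} |φ(x + iy)|² = e^{x²} F(x + iy)`.
-/

open MeasureTheory Metric Real Set
open scoped ENNReal

theorem circleAverage_eq_integral_Ioo {E : Type*} [NormedAddCommGroup E] [NormedSpace ℝ E]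
    (f : ℂ → E) (c : ℂ) (R : ℝ) :
    circleAverage f c R = (2 * π)⁻¹ • ∫ θ in Ioo (-π) π, f (circleMap c R θ) := by
  rw [circleAverage_eq_integral_add (-π), intervalIntegral.integral_comp_add_right
    (fun θ ↦ f (circleMap c R θ)), zero_add, show 2 * π + -π = π by ring,
    intervalIntegral.integral_of_le (by linarith [pi_pos]), integral_Ioc_eq_integral_Ioo]

theorem norm_circleAverage_le {E : Type*} [NormedAddCommGroup E] [NormedSpace ℝ E]
    (f : ℂ → E) (c : ℂ) (R : ℝ) :
    ‖circleAverage f c R‖ ≤ circleAverage (fun z ↦ ‖f z‖) c R := by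
  simp only [circleAverage_def, norm_smul, smul_eq_mul, norm_inv, norm_mul, Real.norm_two,
    Real.norm_of_nonneg pi_pos.le]
  gcongr
  exact intervalIntegral.norm_integral_le_integral_norm (by positivity)

theorem DiffContOnCl.sq_norm_le_circleAverage {f : ℂ → ℂ} {c : ℂ} {R : ℝ}
    (hf : DiffContOnCl ℂ f (ball c |R|)) :
    ‖f c‖ ^ 2 ≤ Real.circleAverage (fun z ↦ ‖f z‖ ^ 2) c R := by
  have hmean : Real.circleAverage (fun z ↦ f z • f z) c R = f c • f c :=
    (hf.smul hf).circleAverage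
  calc ‖f c‖ ^ 2 = ‖Real.circleAverage (fun z ↦ f z • f z) c R‖ := by
        rw [hmean, smul_eq_mul, norm_mul, sq]
    _ ≤ Real.circleAverage (fun z ↦ ‖f z‖ ^ 2) c R := by
        simpa only [smul_eq_mul, ← sq, norm_pow] using
          norm_circleAverage_le (fun z ↦ f z • f z) c R

theorem DiffContOnCl.ofReal_two_pi_mul_sq_norm_le_lintegral_circleMap {f : ℂ → ℂ} {c : ℂ}
    {R : ℝ} (hf : DiffContOnCl ℂ f (ball c |R|)) :
    ENNReal.ofReal (2 * π * ‖f c‖ ^ 2) ≤ ∫⁻ θ in Ioo (-π) π, ‖f (circleMap c R θ)‖ₑ ^ 2 := by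
  have hsub : 2 * π * ‖f c‖ ^ 2 ≤ ∫ θ in Ioo (-π) π, ‖f (circleMap c R θ)‖ ^ 2 := by
    have := hf.sq_norm_le_circleAverage
    rwa [circleAverage_eq_integral_Ioo, smul_eq_mul, le_inv_mul_iff₀ (by positivity)] at this
  calc ENNReal.ofReal (2 * π * ‖f c‖ ^ 2)
      ≤ ‖∫ θ in Ioo (-π) π, ‖f (circleMap c R θ)‖ ^ 2‖ₑ :=
        (ENNReal.ofReal_le_ofReal hsub).trans (Real.ofReal_le_enorm _)
    _ ≤ ∫⁻ θ in Ioo (-π) π, ‖‖f (circleMap c R θ)‖ ^ 2‖ₑ :=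
        enorm_integral_le_lintegral_enorm _
    _ = ∫⁻ θ in Ioo (-π) π, ‖f (circleMap c R θ)‖ₑ ^ 2 := by
        simp only [enorm_pow, enorm_norm]

theorem setLIntegral_Ioo_zero_ofReal {r : ℝ} (hr : 0 ≤ r) :
    ∫⁻ s in Ioo 0 r, ENNReal.ofReal s = ENNReal.ofReal (r ^ 2 / 2) := by
  have hint : IntegrableOn (fun s : ℝ ↦ s) (Ioo 0 r) :=
    continuous_id'.integrableOn_Icc.mono_set Ioo_subset_Icc_self
  have hnonneg : 0 ≤ᵐ[volume.restrict (Ioo 0 r)] fun s : ℝ ↦ s :=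
    (ae_restrict_iff' measurableSet_Ioo).2 (.of_forall fun _ hs ↦ hs.1.le)
  rw [← ofReal_integral_eq_lintegral_ofReal hint hnonneg, ← integral_Ioc_eq_integral_Ioo,
    ← intervalIntegral.integral_of_le hr, integral_id]
  ring_nf

theorem circleMap_eq_add_polarCoord_symm (c : ℂ) (s θ : ℝ) :
    circleMap c s θ = c + Complex.polarCoord.symm (s, θ) := by
  rw [Complex.polarCoord_symm_apply, circleMap, Complex.exp_mul_I]
  push_cast
  ring

theorem Differentiable.ofReal_pi_mul_sq_mul_sq_norm_le_lintegral_ball {f : ℂ → ℂ}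
    (hf : Differentiable ℂ f) (c : ℂ) {r : ℝ} (hr : 0 ≤ r) :
    ENNReal.ofReal (π * r ^ 2 * ‖f c‖ ^ 2) ≤ ∫⁻ z in ball c r, ‖f z‖ₑ ^ 2 := by
  set G : ℂ → ℝ≥0∞ := fun z ↦ ‖f z‖ₑ ^ 2
  have hG : Measurable G := hf.continuous.enorm.measurable.pow_const 2
  set S : Set (ℝ × ℝ) := Ioo 0 r ×ˢ Ioo (-π) π
  calc ENNReal.ofReal (π * r ^ 2 * ‖f c‖ ^ 2)
      = ∫⁻ s in Ioo 0 r, ENNReal.ofReal s * ENNReal.ofReal (2 * π * ‖f c‖ ^ 2) := by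
        rw [lintegral_mul_const _ ENNReal.measurable_ofReal, setLIntegral_Ioo_zero_ofReal hr,
          ← ENNReal.ofReal_mul (by positivity)]
        ring_nf
    _ ≤ ∫⁻ s in Ioo 0 r, ∫⁻ θ in Ioo (-π) π, ENNReal.ofReal s * G (circleMap c s θ) := by
        refine lintegral_mono fun s ↦ ?_
        rw [lintegral_const_mul _ (by fun_prop)]
        gcongr
        exact hf.diffContOnCl.ofReal_two_pi_mul_sq_norm_le_lintegral_circleMap
    _ = ∫⁻ p in S, ENNReal.ofReal p.1 * G (circleMap c p.1 p.2) := by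
        rw [Measure.volume_eq_prod, ← Measure.prod_restrict, lintegral_prod _ (by fun_prop)]
    _ = ∫⁻ p in S,
          ENNReal.ofReal p.1 • (ball c r).indicator G (c + Complex.polarCoord.symm p) := by
        refine setLIntegral_congr_fun (measurableSet_Ioo.prod measurableSet_Ioo) fun p hp ↦ ?_
        have hmem : c + Complex.polarCoord.symm p ∈ ball c r := by
          rw [mem_ball, dist_eq_norm, add_sub_cancel_left, Complex.norm_polarCoord_symm,
            abs_of_pos hp.1.1]
          exact hp.1.2
        rw [indicator_of_mem hmem, circleMap_eq_add_polarCoord_symm, smul_eq_mul]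
    _ ≤ ∫⁻ p in polarCoord.target,
          ENNReal.ofReal p.1 • (ball c r).indicator G (c + Complex.polarCoord.symm p) :=
        lintegral_mono_set (prod_mono Ioo_subset_Ioi_self subset_rfl)
    _ = ∫⁻ z in ball c r, G z := by
        rw [Complex.lintegral_comp_polarCoord_symm (fun z ↦ (ball c r).indicator G (c + z)),
          lintegral_add_left_eq_self, lintegral_indicator measurableSet_ball]

theorem sq_norm_mul_cexp_neg_conj_mul (a w z : ℂ) :
    ‖a * Complex.exp (-(starRingEnd ℂ w * z))‖ ^ 2 =
      ‖a‖ ^ 2 * Real.exp (-‖z‖ ^ 2) * Real.exp (‖z - w‖ ^ 2 - ‖w‖ ^ 2) := by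
  have hre : (-(starRingEnd ℂ w * z)).re = (‖z - w‖ ^ 2 - ‖z‖ ^ 2 - ‖w‖ ^ 2) / 2 := by
    simp only [Complex.sq_norm, Complex.normSq_sub, Complex.neg_re, mul_comm z]
    ring
  rw [norm_mul, mul_pow, Complex.norm_exp, hre, mul_assoc, ← Real.exp_nat_mul, ← Real.exp_add]
  congr 2
  push_cast
  ring

theorem Differentiable.ofReal_mul_gaussian_le_lintegral_ball {φ : ℂ → ℂ}
    (hφ : Differentiable ℂ φ) (w : ℂ) {r : ℝ} (hr : 0 ≤ r) :
    ENNReal.ofReal (π * r ^ 2 * (‖φ w‖ ^ 2 * Real.exp (-‖w‖ ^ 2))) ≤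
      ENNReal.ofReal (Real.exp (r ^ 2)) *
        ∫⁻ z in ball w r, ENNReal.ofReal (‖φ z‖ ^ 2 * Real.exp (-‖z‖ ^ 2)) := by
  set g : ℂ → ℂ := fun z ↦ φ z * Complex.exp (-(starRingEnd ℂ w * z))
  have hg : Differentiable ℂ g := hφ.mul (by fun_prop)
  set F : ℂ → ℝ := fun z ↦ ‖φ z‖ ^ 2 * Real.exp (-‖z‖ ^ 2)
  have hF : ∀ z, 0 ≤ F z := fun z ↦ by positivity
  rw [← ENNReal.mul_le_mul_iff_left (c := ENNReal.ofReal (Real.exp (-‖w‖ ^ 2)))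
    (by positivity) ENNReal.ofReal_ne_top]
  calc ENNReal.ofReal (π * r ^ 2 * F w) * ENNReal.ofReal (Real.exp (-‖w‖ ^ 2))
      = ENNReal.ofReal (π * r ^ 2 * ‖g w‖ ^ 2) := by
        rw [← ENNReal.ofReal_mul (by positivity), sq_norm_mul_cexp_neg_conj_mul, sub_self,
          norm_zero]
        simp only [F]
        ring_nf
    _ ≤ ∫⁻ z in ball w r, ‖g z‖ₑ ^ 2 := hg.ofReal_pi_mul_sq_mul_sq_norm_le_lintegral_ball w hr
    _ ≤ ∫⁻ z in ball w r,
          ENNReal.ofReal (Real.exp (r ^ 2) * Real.exp (-‖w‖ ^ 2)) * ENNReal.ofReal (F z) := by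
        refine setLIntegral_mono' measurableSet_ball fun z hz ↦ ?_
        have hzw : ‖z - w‖ ^ 2 ≤ r ^ 2 := by
          rw [mem_ball, dist_eq_norm] at hz
          gcongr
        have hexp : Real.exp (‖z - w‖ ^ 2 - ‖w‖ ^ 2) ≤
            Real.exp (r ^ 2) * Real.exp (-‖w‖ ^ 2) := by
          rw [← Real.exp_add]
          gcongr
          linarith
        rw [← ofReal_norm, ← ENNReal.ofReal_pow (norm_nonneg _), sq_norm_mul_cexp_neg_conj_mul,
          ← ENNReal.ofReal_mul (by positivity)]
        exact ENNReal.ofReal_le_ofReal ((mul_le_mul_of_nonneg_left hexp (hF z)).trans_eq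
          (mul_comm _ _))
    _ = ENNReal.ofReal (Real.exp (r ^ 2)) * (∫⁻ z in ball w r, ENNReal.ofReal (F z)) *
          ENNReal.ofReal (Real.exp (-‖w‖ ^ 2)) := by
        rw [lintegral_const_mul' _ _ ENNReal.ofReal_ne_top, ENNReal.ofReal_mul (by positivity)]
        ring

theorem lintegral_lintegral_ball_vertical_le (F : ℂ → ℝ≥0∞) (hF : Measurable F) (x r : ℝ) :
    ∫⁻ y : ℝ, ∫⁻ z in ball (x + y * Complex.I) r, F z ≤ ENNReal.ofReal (2 * r) * ∫⁻ z, F z := by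
  set S : Set (ℝ × ℂ) := {p | p.2 ∈ ball (x + p.1 * Complex.I) r}
  have hS : MeasurableSet S :=
    (isOpen_lt (f := fun p : ℝ × ℂ ↦ dist p.2 (x + p.1 * Complex.I)) (by fun_prop)
      continuous_const).measurableSet
  have hslice (z : ℂ) :
      ∫⁻ y, S.indicator (fun p ↦ F p.2) (y, z) ≤ ENNReal.ofReal (2 * r) * F z :=
    calc ∫⁻ y, S.indicator (fun p ↦ F p.2) (y, z)
        ≤ ∫⁻ y, (ball z.im r).indicator (fun _ ↦ F z) y := by
          refine lintegral_mono fun y ↦ ?_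
          by_cases hy : (y, z) ∈ S
          · have hyz : y ∈ ball z.im r := by
              rw [mem_ball, Real.dist_eq, abs_sub_comm]
              have hy' : ‖z - (x + y * Complex.I)‖ < r := by rw [← dist_eq_norm]; exact hy
              simpa using (Complex.abs_im_le_norm (z - (x + y * Complex.I))).trans_lt hy'
            rw [indicator_of_mem hy, indicator_of_mem hyz]
          · rw [indicator_of_notMem hy]
            exact zero_le
      _ = ENNReal.ofReal (2 * r) * F z := by
          rw [lintegral_indicator_const measurableSet_ball, Real.volume_ball, mul_comm]
  calc ∫⁻ y : ℝ, ∫⁻ z in ball (x + y * Complex.I) r, F z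
      = ∫⁻ y, ∫⁻ z, S.indicator (fun p ↦ F p.2) (y, z) := by
        refine lintegral_congr fun y ↦ ?_
        rw [← lintegral_indicator measurableSet_ball]
        rfl
    _ = ∫⁻ z, ∫⁻ y, S.indicator (fun p ↦ F p.2) (y, z) :=
        lintegral_lintegral_swap ((hF.comp measurable_snd).indicator hS).aemeasurable
    _ ≤ ∫⁻ z, ENNReal.ofReal (2 * r) * F z := lintegral_mono hslice
    _ = ENNReal.ofReal (2 * r) * ∫⁻ z, F z := lintegral_const_mul _ hF

theorem integrable_vertical_of_mul_le_lintegral_ball {F : ℂ → ℝ} (hF : Continuous F)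
    (hF_nonneg : ∀ z, 0 ≤ F z) (hF_int : Integrable F) {a C : ℝ≥0∞} {r : ℝ} (ha : a ≠ 0)
    (hC : C ≠ ⊤)
    (hle : ∀ w, a * ENNReal.ofReal (F w) ≤ C * ∫⁻ z in ball w r, ENNReal.ofReal (F z)) (x : ℝ) :
    Integrable (fun y : ℝ ↦ F (x + y * Complex.I)) := by
  refine ⟨(hF.comp (by fun_prop)).aestronglyMeasurable, ?_⟩
  rw [hasFiniteIntegral_iff_ofReal (.of_forall fun y ↦ hF_nonneg _)]
  have hF_fin : ∫⁻ z, ENNReal.ofReal (F z) < ⊤ :=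
    (hasFiniteIntegral_iff_ofReal (.of_forall hF_nonneg)).1 hF_int.2
  have hbound : a * ∫⁻ y : ℝ, ENNReal.ofReal (F (x + y * Complex.I)) ≤
      C * (ENNReal.ofReal (2 * r) * ∫⁻ z, ENNReal.ofReal (F z)) :=
    calc a * ∫⁻ y : ℝ, ENNReal.ofReal (F (x + y * Complex.I))
        = ∫⁻ y : ℝ, a * ENNReal.ofReal (F (x + y * Complex.I)) :=
          (lintegral_const_mul _ (by fun_prop)).symm
      _ ≤ ∫⁻ y : ℝ, C * ∫⁻ z in ball (x + y * Complex.I) r, ENNReal.ofReal (F z) :=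
          lintegral_mono fun y ↦ hle _
      _ ≤ C * (ENNReal.ofReal (2 * r) * ∫⁻ z, ENNReal.ofReal (F z)) := by
          rw [lintegral_const_mul' _ _ hC]
          gcongr
          exact lintegral_lintegral_ball_vertical_le _ (by fun_prop) x r
  refine ENNReal.lt_top_of_mul_ne_top_right (hbound.trans_lt ?_).ne ha
  exact ENNReal.mul_lt_top hC.lt_top (ENNReal.mul_lt_top ENNReal.ofReal_lt_top hF_fin)

/-- If `φ` is entire and square integrable against the Gaussian weight on `ℂ`
(i.e. `φ` belongs to the Bargmann space), then for EVERY fixed `x ∈ ℝ` its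
restriction to the vertical line `x + iℝ` is square integrable with respect to
the measure `e^{−y²} dy`. -/
theorem bargmann_restriction_vertical_line (φ : ℂ → ℂ)
    (hφ : Differentiable ℂ φ)
    (hint : Integrable (fun z : ℂ => ‖φ z‖ ^ 2 * Real.exp (-‖z‖ ^ 2))) :
    ∀ x : ℝ, Integrable (fun y : ℝ => Real.exp (-y ^ 2) * ‖φ (x + y * Complex.I)‖ ^ 2) := by
  intro x
  set F : ℂ → ℝ := fun z ↦ ‖φ z‖ ^ 2 * Real.exp (-‖z‖ ^ 2)
  have hF : Continuous F := (hφ.continuous.norm.pow 2).mul (continuous_norm.pow 2).neg.rexp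
  have hmean (w : ℂ) : ENNReal.ofReal π * ENNReal.ofReal (F w) ≤
      ENNReal.ofReal (Real.exp 1) * ∫⁻ z in ball w 1, ENNReal.ofReal (F z) := by
    have h := hφ.ofReal_mul_gaussian_le_lintegral_ball w zero_le_one
    rwa [one_pow, mul_one, ENNReal.ofReal_mul pi_pos.le] at h
  have hline : Integrable (fun y : ℝ ↦ F (x + y * Complex.I)) :=
    integrable_vertical_of_mul_le_lintegral_ball hF
      (fun z ↦ mul_nonneg (sq_nonneg _) (Real.exp_pos _).le) hint
      (ENNReal.ofReal_pos.2 pi_pos).ne' ENNReal.ofReal_ne_top hmean x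
  refine (hline.const_mul (Real.exp (x ^ 2))).congr (.of_forall fun y ↦ ?_)
  have hnorm : ‖(x : ℂ) + y * Complex.I‖ ^ 2 = x ^ 2 + y ^ 2 := by
    rw [Complex.sq_norm, Complex.normSq_add_mul_I]
  have hx : Real.exp (x ^ 2) * Real.exp (-x ^ 2) = 1 := by
    rw [← Real.exp_add, add_neg_cancel, Real.exp_zero]
  simp only [F, hnorm, neg_add, Real.exp_add]
  linear_combination (‖φ (x + y * Complex.I)‖ ^ 2 * Real.exp (-y ^ 2)) * hx
end

section
/- Let μ, λ ∈ ℝ. For every finitely supported sequence a : ℕ → ℂ with a_0 = 0, one has ‖H_{μ,λ}a‖ ≥ |μ|·‖a‖, where ‖·‖ is the ℓ²-norm. -/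
/-- The Gribov matrix `H_{μ,λ}` acting on sequences:
`(Ha)₀ = 0` and `(Ha)ₙ = iλ(n−1)√n·a_{n−1} + μn·aₙ + iλn√(n+1)·a_{n+1}` for `n ≥ 1`. -/
noncomputable def gribovH (μ lam : ℝ) (a : ℕ → ℂ) : ℕ → ℂ := fun n =>
  if n = 0 then 0 else
    Complex.I * (lam : ℂ) * ((n - 1 : ℕ) : ℂ) * (Real.sqrt n : ℂ) * a (n - 1)
      + (μ : ℂ) * (n : ℂ) * a n
      + Complex.I * (lam : ℂ) * (n : ℂ) * (Real.sqrt (n + 1) : ℂ) * a (n + 1)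

/-- The ℓ²-norm of a sequence. -/
noncomputable def l2norm (a : ℕ → ℂ) : ℝ := Real.sqrt (∑' n, ‖a n‖ ^ 2)


/-!
Write `H_{μ,λ} = μ N + iλ J` with `N = diag(n)` and `J` a real symmetric tridiagonal matrix.
Then `⟨J a, a⟩` is real, so `Re ⟨H a, a⟩ = μ ∑ n |aₙ|²`, which dominates `|μ| ‖a‖²` in absolute
value once `a₀ = 0`; Cauchy–Schwarz `|⟨H a, a⟩| ≤ ‖H a‖ ‖a‖` finishes. A finitely supported
sequence is treated as a vector of `EuclideanSpace ℂ s` for a finite range `s` of indices.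
-/

open Finset ComplexConjugate

theorem mul_norm_le_norm_of_mul_norm_sq_le_abs_re_inner {𝕜 E : Type*} [RCLike 𝕜]
    [NormedAddCommGroup E] [InnerProductSpace 𝕜 E] {c : ℝ} {x y : E}
    (h : c * ‖x‖ ^ 2 ≤ |RCLike.re (inner 𝕜 x y)|) : c * ‖x‖ ≤ ‖y‖ := by
  rcases (norm_nonneg x).eq_or_lt with hx | hx
  · rw [← hx, mul_zero]
    exact norm_nonneg y
  refine le_of_mul_le_mul_right ?_ hx
  calc c * ‖x‖ * ‖x‖ = c * ‖x‖ ^ 2 := by ring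
    _ ≤ |RCLike.re (inner 𝕜 x y)| := h
    _ ≤ ‖inner 𝕜 x y‖ := RCLike.abs_re_le_norm _
    _ ≤ ‖x‖ * ‖y‖ := norm_inner_le_norm x y
    _ = ‖y‖ * ‖x‖ := mul_comm _ _

theorem l2norm_eq_norm_toLp_restrict {a : ℕ → ℂ} {s : Finset ℕ} (ha : ∀ n ∉ s, a n = 0) :
    l2norm a = ‖WithLp.toLp 2 (fun n : s ↦ a n)‖ := by
  rw [l2norm, EuclideanSpace.norm_eq, tsum_eq_sum (s := s) fun n hn ↦ by simp [ha n hn]]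
  exact congrArg Real.sqrt (sum_coe_sort s _).symm

theorem norm_sq_toLp_restrict (a : ℕ → ℂ) (s : Finset ℕ) :
    ‖WithLp.toLp 2 (fun n : s ↦ a n)‖ ^ 2 = ∑ n ∈ s, ‖a n‖ ^ 2 := by
  rw [EuclideanSpace.norm_sq_eq]
  exact sum_coe_sort s fun n ↦ ‖a n‖ ^ 2

theorem inner_toLp_restrict (a b : ℕ → ℂ) (s : Finset ℕ) :
    inner ℂ (WithLp.toLp 2 (fun n : s ↦ a n)) (WithLp.toLp 2 (fun n : s ↦ b n))
      = ∑ n ∈ s, b n * conj (a n) :=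
  sum_coe_sort s fun n ↦ b n * conj (a n)

/-- By truncated subtraction the `n = 0` entry is `w 0 * a 0 + w 0 * a 1`: a real diagonal entry
`w 0` at `(0, 0)`, so the matrix stays real symmetric. -/
def jacobiOffDiag (w : ℕ → ℝ) (a : ℕ → ℂ) (n : ℕ) : ℂ :=
  w (n - 1) * a (n - 1) + w n * a (n + 1)

theorem im_sum_jacobiOffDiag_mul_conj_sub (w : ℕ → ℝ) (a : ℕ → ℂ) (M : ℕ) :
    (∑ n ∈ range M, jacobiOffDiag w a n * conj (a n)
      - w (M - 1) * (a M * conj (a (M - 1)))).im = 0 := by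
  induction M with
  | zero => simp [Complex.mul_conj]
  | succ M ih =>
    rw [sum_range_succ, Nat.add_sub_cancel]
    have hstep : ∑ n ∈ range M, jacobiOffDiag w a n * conj (a n)
        + jacobiOffDiag w a M * conj (a M) - w M * (a (M + 1) * conj (a M)) =
        (∑ n ∈ range M, jacobiOffDiag w a n * conj (a n) - w (M - 1) * (a M * conj (a (M - 1))))
        + w (M - 1) * (a M * conj (a (M - 1)) + a (M - 1) * conj (a M)) := by
      unfold jacobiOffDiag
      ring
    -- `z * conj w + w * conj z` is real
    rw [hstep, Complex.add_im, ih, zero_add, Complex.im_ofReal_mul]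
    simp only [Complex.add_im, Complex.mul_im, Complex.conj_re, Complex.conj_im]
    ring

theorem gribovH_eq_add_jacobiOffDiag (μ lam : ℝ) (a : ℕ → ℂ) (n : ℕ) :
    gribovH μ lam a n = μ * n * a n
      + Complex.I * lam * jacobiOffDiag (fun m ↦ m * √(m + 1)) a n := by
  rcases n with _ | m
  · simp [gribovH, jacobiOffDiag]
  · simp [gribovH, jacobiOffDiag]
    ring

theorem gribovH_eq_zero_of_ge {μ lam : ℝ} {a : ℕ → ℂ} {M : ℕ} (ha : ∀ n, M ≤ n → a n = 0)
    {n : ℕ} (hn : M + 1 ≤ n) : gribovH μ lam a n = 0 := by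
  rw [gribovH_eq_add_jacobiOffDiag, jacobiOffDiag, ha n (by omega), ha (n - 1) (by omega),
    ha (n + 1) (by omega)]
  simp

theorem re_sum_gribovH_mul_conj (μ lam : ℝ) {a : ℕ → ℂ} {M : ℕ} (hM : a M = 0) :
    (∑ n ∈ range M, gribovH μ lam a n * conj (a n)).re = μ * ∑ n ∈ range M, n * ‖a n‖ ^ 2 := by
  have hJ := im_sum_jacobiOffDiag_mul_conj_sub (fun m ↦ m * √(m + 1)) a M
  rw [hM, zero_mul, mul_zero, sub_zero] at hJ
  have hdiag (n : ℕ) : (μ * n * a n * conj (a n)).re = μ * (n * ‖a n‖ ^ 2) := by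
    rw [mul_assoc, mul_assoc, Complex.mul_conj']
    norm_cast
  have hoff : (∑ n ∈ range M, Complex.I * lam * jacobiOffDiag (fun m ↦ m * √(m + 1)) a n
      * conj (a n)).re = 0 := by
    simp only [mul_assoc, ← mul_sum]
    simp [Complex.mul_re, hJ]
  simp only [gribovH_eq_add_jacobiOffDiag, add_mul, sum_add_distrib, Complex.add_re, hoff,
    Complex.re_sum, hdiag, mul_sum, add_zero]

theorem sum_norm_sq_le_sum_mul_norm_sq {a : ℕ → ℂ} (h0 : a 0 = 0) (s : Finset ℕ) :
    ∑ n ∈ s, ‖a n‖ ^ 2 ≤ ∑ n ∈ s, n * ‖a n‖ ^ 2 := by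
  refine sum_le_sum fun n _ ↦ ?_
  rcases n with _ | n
  · simp [h0]
  · exact le_mul_of_one_le_left (sq_nonneg _) (by simp)

/-- For every finitely supported sequence `a` with `a₀ = 0`,
`‖H_{μ,λ} a‖ ≥ |μ|·‖a‖`. -/
theorem gribovH_norm_lower_bound (μ lam : ℝ) (a : ℕ → ℂ)
    (hfin : (Function.support a).Finite) (h0 : a 0 = 0) :
    l2norm (gribovH μ lam a) ≥ |μ| * l2norm a := by
  obtain ⟨N, hN⟩ := hfin.bddAbove
  have ha : ∀ n, N + 1 ≤ n → a n = 0 := fun n hn ↦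
    Function.notMem_support.mp fun h ↦ by have := hN h; omega
  have ha_supp : ∀ n ∉ range (N + 2), a n = 0 := fun n hn ↦ ha n (by simp at hn; omega)
  have hHa_supp : ∀ n ∉ range (N + 2), gribovH μ lam a n = 0 := fun n hn ↦
    gribovH_eq_zero_of_ge ha (by simp at hn; omega)
  rw [ge_iff_le, l2norm_eq_norm_toLp_restrict ha_supp, l2norm_eq_norm_toLp_restrict hHa_supp]
  refine mul_norm_le_norm_of_mul_norm_sq_le_abs_re_inner (𝕜 := ℂ) ?_
  rw [norm_sq_toLp_restrict, inner_toLp_restrict, RCLike.re_to_complex,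
    re_sum_gribovH_mul_conj μ lam (ha _ (by omega)), abs_mul]
  exact mul_le_mul_of_nonneg_left
    ((sum_norm_sq_le_sum_mul_norm_sq h0 _).trans (le_abs_self _)) (abs_nonneg μ)
end

section
/- Let λ' > 0, λ > 0, μ > 0, and set ρ' = λ/λ', ρ = μ/λ, δ = ρ'(ρ + ρ') − 1, and assume δ ≥ 0. Define Θ(x) = ∫_0^x e^{−ρ's}·(1 − s/ρ')^{−(δ+1)} ds for 0 ≤ x < ρ' and the weight r(y) = e^{2ρ'y}·(1 − y/ρ')^{2δ}. Then the double integral ∫_0^{ρ'} ∫_0^{ρ'} Θ(min(y, y₁))²/(λ² y₁²) · r(y) dy dy₁ is finite. -/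
/-! Comparing the integrand of `Θ` with the derivative of `s (1 - s/ρ')^{-(δ+1/4)}` gives
`Θ(m) ≤ 4 m (1 - m/ρ')^{-(δ+1/4)}`. For `m = min(y, y₁)` we have `m ≤ y₁` and
`r(y) ≤ e^{2ρ'²} (1 - m/ρ')^{2δ}`, so the integrand is at most a constant times
`(1 - m/ρ')^{-1/2} ≤ (1 - y/ρ')^{-1/2} + (1 - y₁/ρ')^{-1/2}`, which is integrable on the
square. -/

open MeasureTheory

/-- `Θ(x) = ∫₀ˣ e^{−ρ's}·(1 − s/ρ')^{−(δ+1)} ds`. -/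
noncomputable def ThetaInt (ρ' δ : ℝ) (x : ℝ) : ℝ :=
  ∫ s in Set.Ioc (0 : ℝ) x, Real.exp (-ρ' * s) * (1 - s / ρ') ^ (-(δ + 1))

/-- The weight `r(y) = e^{2ρ'y}·(1 − y/ρ')^{2δ}`. -/
noncomputable def rWeight (ρ' δ : ℝ) (y : ℝ) : ℝ :=
  Real.exp (2 * ρ' * y) * (1 - y / ρ') ^ (2 * δ)

open Set

theorem stronglyMeasurable_setIntegral_Ioc {E : Type*} [NormedAddCommGroup E] [NormedSpace ℝ E]
    {μ : Measure ℝ} [SFinite μ] {f : ℝ → E} (hf : StronglyMeasurable f) (a : ℝ) :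
    StronglyMeasurable fun x => ∫ s in Ioc a x, f s ∂μ := by
  have hF : StronglyMeasurable fun p : ℝ × ℝ => (Ioc a p.1).indicator f p.2 := by
    have hset : MeasurableSet {p : ℝ × ℝ | p.2 ∈ Ioc a p.1} :=
      (measurableSet_lt measurable_const measurable_snd).inter
        (measurableSet_le measurable_snd measurable_fst)
    exact (hf.comp_measurable measurable_snd).piecewise hset stronglyMeasurable_const
  simp_rw [← integral_indicator measurableSet_Ioc]
  exact hF.integral_prod_right' (ν := μ)

theorem integrableOn_one_sub_div_rpow {c r : ℝ} (hc : 0 < c) (hr : -1 < r) :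
    IntegrableOn (fun x => (1 - x / c) ^ r) (Ioo 0 c) := by
  have h := ((intervalIntegral.intervalIntegrable_rpow' hr (a := 0) (b := 1)).comp_sub_left 1).symm
    |>.comp_mul_left (c := c⁻¹)
  simp only [sub_self, sub_zero, div_inv_eq_mul, one_mul, zero_mul] at h
  simpa [div_eq_inv_mul] using (intervalIntegrable_iff_integrableOn_Ioo_of_le hc.le).1 h

theorem MeasureTheory.IntegrableOn.add_prod {α β E : Type*} [MeasurableSpace α]
    [MeasurableSpace β] [NormedAddCommGroup E] {μ : Measure α} {ν : Measure β} [SFinite μ]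
    [SFinite ν] {s : Set α} {t : Set β}
    [IsFiniteMeasure (μ.restrict s)] [IsFiniteMeasure (ν.restrict t)]
    {f : α → E} {g : β → E} (hf : IntegrableOn f s μ) (hg : IntegrableOn g t ν) :
    IntegrableOn (fun p => f p.1 + g p.2) (s ×ˢ t) (μ.prod ν) := by
  rw [IntegrableOn, ← Measure.prod_restrict]
  exact (hf.comp_fst _).add (hg.comp_snd _)

theorem one_sub_div_pos_of_lt {c x : ℝ} (hc : 0 < c) (hx : x < c) : 0 < 1 - x / c :=
  sub_pos.2 ((div_lt_one hc).2 hx)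

theorem one_sub_div_nonneg_of_le {c x : ℝ} (hc : 0 < c) (hx : x ≤ c) : 0 ≤ 1 - x / c :=
  sub_nonneg.2 ((div_le_one hc).2 hx)

section

variable {ρ' δ : ℝ}

theorem hasDerivAt_mul_one_sub_div_rpow (hρ' : 0 < ρ') (β : ℝ) {s : ℝ} (hs : s < ρ') :
    HasDerivAt (fun x => x * (1 - x / ρ') ^ (-β))
      ((1 - s / ρ') ^ (-β - 1) * (1 - s / ρ' + β * (s / ρ'))) s := by
  have hu := one_sub_div_pos_of_lt hρ' hs
  have hinner : HasDerivAt (fun x => 1 - x / ρ') (-(1 / ρ')) s := by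
    simpa using ((hasDerivAt_id s).div_const ρ').const_sub 1
  refine ((hasDerivAt_id s).mul (hinner.rpow_const (Or.inl hu.ne'))).congr_deriv ?_
  rw [Real.rpow_sub_one hu.ne', id]
  generalize 1 - s / ρ' = u at hu ⊢
  field_simp

theorem rpow_neg_add_one_le_four_mul {u : ℝ} (hu0 : 0 < u) (hu1 : u ≤ 1) (hδ : 0 ≤ δ) :
    u ^ (-(δ + 1)) ≤ 4 * (u ^ (-(δ + 1 / 4) - 1) * (u + (δ + 1 / 4) * (1 - u))) := by
  have hquarter : 1 / 4 ≤ u + (δ + 1 / 4) * (1 - u) := by nlinarith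
  calc u ^ (-(δ + 1)) ≤ u ^ (-(δ + 1 / 4) - 1) :=
        Real.rpow_le_rpow_of_exponent_ge hu0 hu1 (by linarith)
    _ = 4 * (u ^ (-(δ + 1 / 4) - 1) * (1 / 4)) := by ring
    _ ≤ _ := by gcongr

theorem thetaInt_le (hρ' : 0 < ρ') (hδ : 0 ≤ δ) {m : ℝ} (hm : 0 ≤ m) (hmρ : m < ρ') :
    ThetaInt ρ' δ m ≤ 4 * (m * (1 - m / ρ') ^ (-(δ + 1 / 4))) := by
  set φ : ℝ → ℝ := fun x => 4 * (x * (1 - x / ρ') ^ (-(δ + 1 / 4)))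
  have hφ : ∀ x ∈ Icc 0 m, HasDerivAt φ
      (4 * ((1 - x / ρ') ^ (-(δ + 1 / 4) - 1) * (1 - x / ρ' + (δ + 1 / 4) * (x / ρ')))) x :=
    fun x hx => (hasDerivAt_mul_one_sub_div_rpow hρ' _ (hx.2.trans_lt hmρ)).const_mul 4
  have hu : ∀ x ∈ Icc 0 m, 0 < 1 - x / ρ' := fun x hx =>
    one_sub_div_pos_of_lt hρ' (hx.2.trans_lt hmρ)
  have hcont :
      ContinuousOn (fun s => Real.exp (-ρ' * s) * (1 - s / ρ') ^ (-(δ + 1))) (Icc 0 m) :=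
    (by fun_prop : Continuous fun s => Real.exp (-ρ' * s)).continuousOn.mul
      (ContinuousOn.rpow_const (by fun_prop) fun x hx => Or.inl (hu x hx).ne')
  have hle : ∀ x ∈ Ioo 0 m, Real.exp (-ρ' * x) * (1 - x / ρ') ^ (-(δ + 1)) ≤
      4 * ((1 - x / ρ') ^ (-(δ + 1 / 4) - 1) * (1 - x / ρ' + (δ + 1 / 4) * (x / ρ'))) := by
    intro x hx
    have hux := hu x (Ioo_subset_Icc_self hx)
    have hux1 : 1 - x / ρ' ≤ 1 := by linarith [div_pos hx.1 hρ']
    calc Real.exp (-ρ' * x) * (1 - x / ρ') ^ (-(δ + 1)) ≤ 1 * (1 - x / ρ') ^ (-(δ + 1)) := by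
          gcongr
          rw [Real.exp_le_one_iff]; nlinarith [hx.1]
      _ ≤ _ := by
        simpa using rpow_neg_add_one_le_four_mul hux hux1 hδ
  have hprimitive := intervalIntegral.integral_le_sub_of_hasDeriv_right_of_le hm
    (fun x hx => (hφ x hx).continuousAt.continuousWithinAt)
    (fun x hx => (hφ x (Ioo_subset_Icc_self hx)).hasDerivWithinAt) hcont.integrableOn_Icc hle
  simpa [φ, ThetaInt, intervalIntegral.integral_of_le hm] using hprimitive

theorem thetaInt_nonneg (hρ' : 0 < ρ') {x : ℝ} (hx : x ≤ ρ') : 0 ≤ ThetaInt ρ' δ x := by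
  refine setIntegral_nonneg measurableSet_Ioc fun s hs => ?_
  exact mul_nonneg (Real.exp_pos _).le
    (Real.rpow_nonneg (one_sub_div_nonneg_of_le hρ' (hs.2.trans hx)) _)

theorem rWeight_nonneg (hρ' : 0 < ρ') {y : ℝ} (hy : y ≤ ρ') : 0 ≤ rWeight ρ' δ y :=
  mul_nonneg (Real.exp_pos _).le (Real.rpow_nonneg (one_sub_div_nonneg_of_le hρ' hy) _)

theorem rWeight_le (hρ' : 0 < ρ') (hδ : 0 ≤ δ) {m y : ℝ} (hmy : m ≤ y) (hy : y ≤ ρ') :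
    rWeight ρ' δ y ≤ Real.exp (2 * ρ' ^ 2) * (1 - m / ρ') ^ (2 * δ) := by
  have hy' := one_sub_div_nonneg_of_le hρ' hy
  have hexp : Real.exp (2 * ρ' * y) ≤ Real.exp (2 * ρ' ^ 2) := Real.exp_le_exp.2 (by nlinarith)
  have hpow : (1 - y / ρ') ^ (2 * δ) ≤ (1 - m / ρ') ^ (2 * δ) :=
    Real.rpow_le_rpow hy' (by gcongr) (by positivity)
  exact mul_le_mul hexp hpow (Real.rpow_nonneg hy' _) (Real.exp_pos _).le

theorem thetaInt_sq_div_mul_rWeight_le (hρ' : 0 < ρ') (hδ : 0 ≤ δ) (lam : ℝ) {y y₁ : ℝ}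
    (hy : y ∈ Ioo 0 ρ') (hy₁ : y₁ ∈ Ioo 0 ρ') :
    ThetaInt ρ' δ (min y y₁) ^ 2 / (lam ^ 2 * y₁ ^ 2) * rWeight ρ' δ y ≤
      16 * Real.exp (2 * ρ' ^ 2) / lam ^ 2 *
        ((1 - y / ρ') ^ (-(1 / 2 : ℝ)) + (1 - y₁ / ρ') ^ (-(1 / 2 : ℝ))) := by
  set m := min y y₁
  have hm0 : 0 < m := lt_min hy.1 hy₁.1
  have hmρ : m < ρ' := (min_le_left _ _).trans_lt hy.2
  have hu := one_sub_div_pos_of_lt hρ' hmρ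
  have hΘ : ThetaInt ρ' δ m / y₁ ≤ 4 * (1 - m / ρ') ^ (-(δ + 1 / 4)) := by
    rw [div_le_iff₀ hy₁.1]
    calc ThetaInt ρ' δ m ≤ 4 * (m * (1 - m / ρ') ^ (-(δ + 1 / 4))) :=
          thetaInt_le hρ' hδ hm0.le hmρ
      _ ≤ 4 * (y₁ * (1 - m / ρ') ^ (-(δ + 1 / 4))) := by gcongr; exact min_le_right _ _
      _ = _ := by ring
  have hpow : ((1 - m / ρ') ^ (-(δ + 1 / 4))) ^ 2 * (1 - m / ρ') ^ (2 * δ) =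
      (1 - m / ρ') ^ (-(1 / 2 : ℝ)) := by
    rw [← Real.rpow_natCast, ← Real.rpow_mul hu.le, ← Real.rpow_add hu]
    ring_nf
  have hmin : (1 - m / ρ') ^ (-(1 / 2 : ℝ)) ≤
      (1 - y / ρ') ^ (-(1 / 2 : ℝ)) + (1 - y₁ / ρ') ^ (-(1 / 2 : ℝ)) := by
    rcases min_choice y y₁ with h | h <;> simp only [m, h]
    · exact le_add_of_nonneg_right (Real.rpow_nonneg (one_sub_div_nonneg_of_le hρ' hy₁.2.le) _)
    · exact le_add_of_nonneg_left (Real.rpow_nonneg (one_sub_div_nonneg_of_le hρ' hy.2.le) _)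
  calc ThetaInt ρ' δ m ^ 2 / (lam ^ 2 * y₁ ^ 2) * rWeight ρ' δ y
      = (ThetaInt ρ' δ m / y₁) ^ 2 / lam ^ 2 * rWeight ρ' δ y := by ring
    _ ≤ (4 * (1 - m / ρ') ^ (-(δ + 1 / 4))) ^ 2 / lam ^ 2 *
          (Real.exp (2 * ρ' ^ 2) * (1 - m / ρ') ^ (2 * δ)) := by
      have := div_nonneg (thetaInt_nonneg (δ := δ) hρ' hmρ.le) hy₁.1.le
      have := rWeight_nonneg (δ := δ) hρ' hy.2.le
      gcongr
      exact rWeight_le hρ' hδ (min_le_left _ _) hy.2.le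
    _ = 16 * Real.exp (2 * ρ' ^ 2) / lam ^ 2 * (1 - m / ρ') ^ (-(1 / 2 : ℝ)) := by
      rw [← hpow]; ring
    _ ≤ _ := by gcongr

end

theorem regularized_inverse_hilbert_schmidt_general (lam' lam ρ' δ : ℝ)
    (hlam' : 0 < lam') (hlam : 0 < lam)
    (hρ' : ρ' = lam / lam')
    (hδ0 : 0 ≤ δ) :
    IntegrableOn
      (fun p : ℝ × ℝ =>
        (ThetaInt ρ' δ (min p.1 p.2)) ^ 2 / (lam ^ 2 * p.2 ^ 2) * rWeight ρ' δ p.1)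
      (Set.Ioc 0 ρ' ×ˢ Set.Ioc 0 ρ') := by
  have hρ0 : 0 < ρ' := hρ' ▸ div_pos hlam hlam'
  have hg := integrableOn_one_sub_div_rpow hρ0 (r := -(1 / 2)) (by norm_num)
  have hdom := (hg.add_prod hg).const_mul (16 * Real.exp (2 * ρ' ^ 2) / lam ^ 2)
  have hΘ : Measurable (ThetaInt ρ' δ) :=
    (stronglyMeasurable_setIntegral_Ioc (by fun_prop) 0).measurable
  have hmeas : Measurable fun p : ℝ × ℝ =>
      (ThetaInt ρ' δ (min p.1 p.2)) ^ 2 / (lam ^ 2 * p.2 ^ 2) * rWeight ρ' δ p.1 := by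
    unfold rWeight; fun_prop
  -- `Θ(ρ')` is a junk value (non-integrable integrand): discard the corner `(ρ', ρ')`.
  refine IntegrableOn.congr_set_ae ?_ (Measure.set_prod_ae_eq Ioo_ae_eq_Ioc Ioo_ae_eq_Ioc).symm
  refine hdom.mono' hmeas.aestronglyMeasurable
    (ae_restrict_of_forall_mem (measurableSet_Ioo.prod measurableSet_Ioo) fun p hp => ?_)
  have := rWeight_nonneg (δ := δ) hρ0 hp.1.2.le
  rw [Real.norm_of_nonneg (by positivity)]
  exact thetaInt_sq_div_mul_rWeight_le hρ0 hδ0 lam hp.1 hp.2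

/-- For `λ' > 0`, `λ > 0`, `μ > 0`, with `ρ' = λ/λ'`, `ρ = μ/λ`,
`δ = ρ'(ρ+ρ') − 1 ≥ 0`, the double integral
`∫₀^{ρ'} ∫₀^{ρ'} Θ(min(y,y₁))²/(λ²y₁²)·r(y) dy dy₁` is finite
(the inverse of the regularized Gribov operator is Hilbert–Schmidt on
`L²([0,ρ'], r(y)dy)`). -/
theorem regularized_inverse_hilbert_schmidt (lam' lam μ ρ' ρ δ : ℝ)
    (hlam' : 0 < lam') (hlam : 0 < lam) (hμ : 0 < μ)
    (hρ' : ρ' = lam / lam') (hρ : ρ = μ / lam) (hδ : δ = ρ' * (ρ + ρ') - 1)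
    (hδ0 : 0 ≤ δ) :
    IntegrableOn
      (fun p : ℝ × ℝ =>
        (ThetaInt ρ' δ (min p.1 p.2)) ^ 2 / (lam ^ 2 * p.2 ^ 2) * rWeight ρ' δ p.1)
      (Set.Ioc 0 ρ' ×ˢ Set.Ioc 0 ρ') :=
  regularized_inverse_hilbert_schmidt_general lam' lam ρ' δ hlam' hlam hρ' hδ0
end

section
/- Let λ', λ, μ be real with λ' ≠ 0, let σ ∈ ℂ, and let φ : ℂ → ℂ be an entire function satisfying the eigenvalue equation (λ'z² + iλz)·φ''(z) + (iλz² + μz)·φ'(z) = σ·φ(z) for all z ∈ ℂ. Then there exist constants C > 0 and M > 0 such that |φ(z)| ≤ C·e^{M|z|} for all z ∈ ℂ; in particular ∫_ℂ |φ(z)|² e^{−|z|²} dx dy < ∞, i.e. φ belongs to the Bargmann space. -/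
/-!
Away from the singular points the leading coefficient `λ' z²` dominates, so the equation
gives `|φ''(z)| ≤ K (|φ(z)| + |φ'(z)|)` for `|z| ≥ R`. Along each ray from the circle `|z| = R`,
Grönwall's inequality applied to the pair `(φ, φ')` then yields `|φ(z)| ≤ C e^{M|z|}`, and such
growth is dominated by the Gaussian weight: `C² e^{2M|z| - |z|²} ≤ C² e^{2M²} e^{-|z|²/2}`.
-/

open MeasureTheory Real

def HasExponentialGrowth {V E : Type*} [Norm V] [Norm E] (f : V → E) : Prop :=
  ∃ C > 0, ∃ M > 0, ∀ z, ‖f z‖ ≤ C * exp (M * ‖z‖)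

theorem integrable_exp_neg_mul_sq_norm {V : Type*} [NormedAddCommGroup V] [InnerProductSpace ℝ V]
    [FiniteDimensional ℝ V] [MeasurableSpace V] [BorelSpace V] {b : ℝ} (hb : 0 < b) :
    Integrable (fun v : V => exp (-b * ‖v‖ ^ 2)) := by
  have h := (GaussianFourier.integrable_cexp_neg_mul_sq_norm_add (V := V) (b := b)
    (by simpa using hb) 0 0).norm
  refine h.congr (ae_of_all _ fun v => ?_)
  simp only [Complex.norm_exp, inner_zero_left, Complex.ofReal_zero, mul_zero, add_zero]
  norm_cast

namespace HasExponentialGrowth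

variable {V E F : Type*}

theorem mono [Norm V] [Norm E] [Norm F] {f : V → E} {g : V → F} (hf : HasExponentialGrowth f)
    (hgf : ∀ z, ‖g z‖ ≤ ‖f z‖) : HasExponentialGrowth g := by
  obtain ⟨C, hC, M, hM, hbound⟩ := hf
  exact ⟨C, hC, M, hM, fun z => (hgf z).trans (hbound z)⟩

theorem integrable_sq_mul_exp_neg_sq [NormedAddCommGroup V] [InnerProductSpace ℝ V]
    [FiniteDimensional ℝ V] [MeasurableSpace V] [BorelSpace V] [NormedAddCommGroup E]
    {f : V → E} (hf : HasExponentialGrowth f) (hcont : Continuous f) :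
    Integrable (fun z => ‖f z‖ ^ 2 * exp (-‖z‖ ^ 2)) := by
  obtain ⟨C, -, M, -, hbound⟩ := hf
  refine ((integrable_exp_neg_mul_sq_norm (V := V) one_half_pos).const_mul
    (C ^ 2 * exp (2 * M ^ 2))).mono' (by fun_prop) (ae_of_all _ fun z => ?_)
  have hsq : ‖f z‖ ^ 2 ≤ C ^ 2 * exp (2 * M * ‖z‖) := by
    calc ‖f z‖ ^ 2 ≤ (C * exp (M * ‖z‖)) ^ 2 := by gcongr; exact hbound z
      _ = C ^ 2 * exp (2 * M * ‖z‖) := by rw [mul_pow, ← exp_nat_mul]; ring_nf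
  have hexp :
      exp (2 * M * ‖z‖) * exp (-‖z‖ ^ 2) ≤ exp (2 * M ^ 2) * exp (-(1 / 2) * ‖z‖ ^ 2) := by
    rw [← exp_add, ← exp_add, exp_le_exp]
    nlinarith [sq_nonneg (‖z‖ - 2 * M)]
  rw [Real.norm_of_nonneg (by positivity)]
  calc ‖f z‖ ^ 2 * exp (-‖z‖ ^ 2) ≤ C ^ 2 * exp (2 * M * ‖z‖) * exp (-‖z‖ ^ 2) := by gcongr
    _ ≤ C ^ 2 * (exp (2 * M ^ 2) * exp (-(1 / 2) * ‖z‖ ^ 2)) := by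
      rw [mul_assoc]; gcongr
    _ = _ := by ring

end HasExponentialGrowth

section Gronwall

variable {E : Type*} [NormedAddCommGroup E] [NormedSpace ℂ E] {F : ℂ → E} {R K : ℝ}

theorem norm_le_mul_exp_of_norm_deriv_le_on_ray (hF : Differentiable ℂ F)
    (hbound : ∀ w, R ≤ ‖w‖ → ‖deriv F w‖ ≤ K * ‖F w‖) (hR : 0 ≤ R) {u : ℂ} (hu : ‖u‖ = 1)
    {t : ℝ} (hRt : R ≤ t) :
    ‖F (t • u)‖ ≤ ‖F (R • u)‖ * exp (K * (t - R)) := by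
  have hnorm : ∀ s : ℝ, 0 ≤ s → ‖s • u‖ = s := fun s hs => by
    rw [norm_smul, hu, mul_one, Real.norm_of_nonneg hs]
  have hderiv : ∀ s : ℝ, HasDerivAt (fun s : ℝ => F (s • u)) (u • deriv F (s • u)) s :=
    fun s => by
      simpa [Function.comp_def] using
        (hF (s • u)).hasDerivAt.scomp s ((hasDerivAt_id s).smul_const u)
  have hcont : Continuous fun s : ℝ => F (s • u) := hF.continuous.comp (by fun_prop)
  have hray := norm_le_gronwallBound_of_norm_deriv_right_le (ε := 0) hcont.continuousOn
    (fun s _ => (hderiv s).hasDerivWithinAt) le_rfl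
    (fun s hs => by
      rw [norm_smul, hu, one_mul, add_zero]
      exact hbound _ ((hnorm s (hR.trans hs.1)).symm ▸ hs.1))
    t ⟨hRt, le_rfl⟩
  simpa only [gronwallBound_ε0] using hray

theorem hasExponentialGrowth_of_norm_deriv_le (hF : Differentiable ℂ F)
    (hbound : ∀ w, R ≤ ‖w‖ → ‖deriv F w‖ ≤ K * ‖F w‖) : HasExponentialGrowth F := by
  set R₀ := max R 0
  obtain ⟨C, hC⟩ := (isCompact_closedBall (0 : ℂ) R₀).exists_bound_of_continuousOn
    hF.continuous.continuousOn
  have hC0 : 0 ≤ C := (norm_nonneg _).trans (hC 0 (Metric.mem_closedBall_self (le_max_right _ _)))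
  refine ⟨C + 1, by linarith, |K| + 1, by positivity, fun z => ?_⟩
  have hexp : 1 ≤ exp ((|K| + 1) * ‖z‖) := one_le_exp (by positivity)
  rcases le_or_gt ‖z‖ R₀ with hz | hz
  · have := hC z (mem_closedBall_zero_iff.mpr hz)
    nlinarith
  have hz0 : ‖z‖ ≠ 0 := ((le_max_right R 0).trans_lt hz).ne'
  set u := ‖z‖⁻¹ • z
  have hu : ‖u‖ = 1 := by rw [norm_smul, norm_inv, norm_norm, inv_mul_cancel₀ hz0]
  have hzu : ‖z‖ • u = z := by rw [smul_smul, mul_inv_cancel₀ hz0, one_smul]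
  have hray := norm_le_mul_exp_of_norm_deriv_le_on_ray hF
    (fun w hw => hbound w ((le_max_left R 0).trans hw)) (le_max_right R 0) hu hz.le
  have hstart : ‖F (R₀ • u)‖ ≤ C := hC _ (by
    rw [mem_closedBall_zero_iff, norm_smul, hu, mul_one, Real.norm_of_nonneg (le_max_right _ _)])
  have hK : K * (‖z‖ - R₀) ≤ (|K| + 1) * ‖z‖ := by
    nlinarith [le_abs_self K, abs_nonneg K, le_max_right R 0, norm_nonneg z]
  rw [hzu] at hray
  calc ‖F z‖ ≤ ‖F (R₀ • u)‖ * exp (K * (‖z‖ - R₀)) := hray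
    _ ≤ (C + 1) * exp ((|K| + 1) * ‖z‖) := by gcongr; linarith

theorem hasExponentialGrowth_of_norm_deriv_deriv_le [CompleteSpace E] {f : ℂ → E}
    (hf : Differentiable ℂ f)
    (hbound : ∀ w, R ≤ ‖w‖ → ‖deriv (deriv f) w‖ ≤ K * (‖f w‖ + ‖deriv f w‖)) :
    HasExponentialGrowth f := by
  have hderiv : ∀ w, deriv (fun z => (f z, deriv f z)) w = (deriv f w, deriv (deriv f) w) :=
    fun w => ((hf w).hasDerivAt.prodMk (hf.deriv w).hasDerivAt).deriv
  refine HasExponentialGrowth.mono (hasExponentialGrowth_of_norm_deriv_le (hf.prodMk hf.deriv)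
    (R := R) (K := 2 * |K| + 1) fun w hw => ?_) fun z => norm_fst_le (f z, deriv f z)
  have h₁ := norm_fst_le (f w, deriv f w)
  have h₂ := norm_snd_le (f w, deriv f w)
  have h₃ : K * (‖f w‖ + ‖deriv f w‖) ≤ |K| * (‖f w‖ + ‖deriv f w‖) :=
    mul_le_mul_of_nonneg_right (le_abs_self K) (by positivity)
  rw [hderiv, Prod.norm_def, max_le_iff]
  constructor <;> nlinarith [hbound w hw, abs_nonneg K, norm_nonneg (f w, deriv f w)]

end Gronwall

section NormedField

variable {𝕜 : Type*} [NormedField 𝕜]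

theorem le_norm_mul_sq_add_mul {a b w : 𝕜} (h : 2 * ‖b‖ ≤ ‖a‖ * ‖w‖) :
    ‖a‖ / 2 * ‖w‖ ^ 2 ≤ ‖a * w ^ 2 + b * w‖ := by
  have := norm_sub_le (a * w ^ 2 + b * w) (b * w)
  rw [add_sub_cancel_right, norm_mul, norm_mul, norm_pow] at this
  nlinarith [norm_nonneg w]

theorem norm_mul_sq_add_mul_le {a b w : 𝕜} (h : 1 ≤ ‖w‖) :
    ‖a * w ^ 2 + b * w‖ ≤ (‖a‖ + ‖b‖) * ‖w‖ ^ 2 := by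
  calc ‖a * w ^ 2 + b * w‖ ≤ ‖a‖ * ‖w‖ ^ 2 + ‖b‖ * ‖w‖ := by
        rw [← norm_pow, ← norm_mul, ← norm_mul]; exact norm_add_le _ _
    _ ≤ (‖a‖ + ‖b‖) * ‖w‖ ^ 2 := by
        nlinarith [mul_le_mul_of_nonneg_left (by nlinarith : ‖w‖ ≤ ‖w‖ ^ 2) (norm_nonneg b)]

theorem norm_le_of_mul_add_mul_eq {A B σ y p s : 𝕜} {c b r : ℝ}
    (heq : A * s + B * p = σ * y) (hA : c * r ≤ ‖A‖) (hB : ‖B‖ ≤ b * r) (hc : 0 < c)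
    (hr : 1 ≤ r) : ‖s‖ ≤ (‖σ‖ + b) / c * (‖y‖ + ‖p‖) := by
  have hb : 0 ≤ b := nonneg_of_mul_nonneg_left ((norm_nonneg B).trans hB) (by linarith)
  have hAs : ‖A‖ * ‖s‖ ≤ ‖σ‖ * ‖y‖ + b * r * ‖p‖ := by
    calc ‖A‖ * ‖s‖ = ‖σ * y - B * p‖ := by rw [← norm_mul, ← heq, add_sub_cancel_right]
      _ ≤ ‖σ‖ * ‖y‖ + ‖B‖ * ‖p‖ := by simpa only [norm_mul] using norm_sub_le (σ * y) (B * p)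
      _ ≤ ‖σ‖ * ‖y‖ + b * r * ‖p‖ := by gcongr
  have hr' : r * (c * ‖s‖) ≤ r * ((‖σ‖ + b) * (‖y‖ + ‖p‖)) := by
    have hσy : ‖σ‖ * ‖y‖ ≤ r * (‖σ‖ * ‖y‖) := le_mul_of_one_le_left (by positivity) hr
    have hrest : 0 ≤ r * (‖σ‖ * ‖p‖ + b * ‖y‖) := by positivity
    nlinarith [mul_le_mul_of_nonneg_right hA (norm_nonneg s)]
  rw [div_mul_eq_mul_div, le_div_iff₀ hc, mul_comm]
  exact le_of_mul_le_mul_left hr' (by linarith)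

end NormedField

theorem hasExponentialGrowth_of_heun {a b c d σ : ℂ} (ha : a ≠ 0) {f : ℂ → ℂ}
    (hf : Differentiable ℂ f)
    (heq : ∀ z, (a * z ^ 2 + b * z) * deriv (deriv f) z + (c * z ^ 2 + d * z) * deriv f z
      = σ * f z) :
    HasExponentialGrowth f := by
  have ha' : 0 < ‖a‖ := norm_pos_iff.mpr ha
  refine hasExponentialGrowth_of_norm_deriv_deriv_le hf (R := max 1 (2 * ‖b‖ / ‖a‖))
    (K := (‖σ‖ + (‖c‖ + ‖d‖)) / (‖a‖ / 2))
    fun w hw => norm_le_of_mul_add_mul_eq (r := ‖w‖ ^ 2) (heq w) ?_ ?_ (half_pos ha') ?_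
  · have hb : 2 * ‖b‖ ≤ ‖a‖ * ‖w‖ := (div_le_iff₀' ha').mp ((le_max_right _ _).trans hw)
    exact le_norm_mul_sq_add_mul hb
  · exact norm_mul_sq_add_mul_le ((le_max_left _ _).trans hw)
  · exact one_le_pow₀ ((le_max_left _ _).trans hw)

/-- Every entire solution of the eigenvalue equation
`(λ'z² + iλz)φ''(z) + (iλz² + μz)φ'(z) = σφ(z)` (with `λ' ≠ 0`) has at most
exponential growth, and in particular belongs to the Bargmann space. -/
theorem heun_entire_solution_mem_bargmann (lam' lam μ : ℝ) (hlam' : lam' ≠ 0)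
    (σ : ℂ) (φ : ℂ → ℂ) (hφ : Differentiable ℂ φ)
    (heq : ∀ z : ℂ,
      ((lam' : ℂ) * z ^ 2 + Complex.I * (lam : ℂ) * z) * iteratedDeriv 2 φ z
        + (Complex.I * (lam : ℂ) * z ^ 2 + (μ : ℂ) * z) * deriv φ z = σ * φ z) :
    (∃ C > 0, ∃ M > 0, ∀ z : ℂ, ‖φ z‖ ≤ C * Real.exp (M * ‖z‖)) ∧
      Integrable (fun z : ℂ => ‖φ z‖ ^ 2 * Real.exp (-‖z‖ ^ 2)) := by
  rw [iteratedDeriv_succ, iteratedDeriv_one] at heq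
  have hgrowth : HasExponentialGrowth φ :=
    hasExponentialGrowth_of_heun (Complex.ofReal_ne_zero.mpr hlam') hφ heq
  exact ⟨hgrowth, hgrowth.integrable_sq_mul_exp_neg_sq hφ.continuous⟩
end

section
/- Fix λ > 0, λ' > 0, μ > 0, set ρ' = λ/λ', δ = ρ'(μ/λ + ρ') − 1 and assume ρ'(μ/λ + ρ') ≥ 1. Let σ ∈ ℂ and let u : ℝ → ℂ be twice continuously differentiable on an open interval containing [0, ρ'], with u(0) = 0, u not identically zero on [0, ρ'], and satisfying (λ'y² − λy)u''(y) + (λy² + μy)u'(y) = σ·u(y) for all y ∈ [0, ρ']. Then σ is real. -/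
/-!
On `(0, ρ')` the operator is in Sturm–Liouville form `r · M u = (p u')'` with
`p(y) = -λ' e^{ρ'y} (ρ' - y)^{1+δ}`, a coefficient that vanishes at `ρ'`. Multiplying
`(p u')' = σ r u` by `ū` and integrating over `[0, ρ']`, the boundary term `p u' ū` vanishes at
both ends (`u 0 = 0`, `p ρ' = 0`) and `p |u'|²` is real, so `Im σ · ∫ r |u|² = 0`. The integral
converges because `|u y| = O(y)` near `0`, and it is positive because `u ≢ 0`.
-/

open MeasureTheory Set ComplexConjugate

/-- The restriction of the regularized Gribov operator to the negative imaginary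
axis: `(Mu)(y) = (λ'y² − λy)u''(y) + (λy² + μy)u'(y)`. -/
noncomputable def Mop (lam' lam μ : ℝ) (u : ℝ → ℂ) (y : ℝ) : ℂ :=
  ((lam' * y ^ 2 - lam * y : ℝ) : ℂ) * deriv (deriv u) y
    + ((lam * y ^ 2 + μ * y : ℝ) : ℂ) * deriv u y

theorem exists_mem_Ioo_ne_zero_of_continuousOn {E : Type*} [TopologicalSpace E] [Zero E]
    [T2Space E] {f : ℝ → E} {a b : ℝ} (hab : a < b) (hf : ContinuousOn f (Icc a b))
    (h : ∃ y ∈ Icc a b, f y ≠ 0) : ∃ x ∈ Ioo a b, f x ≠ 0 := by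
  by_contra! hzero
  obtain ⟨y, hy, hfy⟩ := h
  have hIcc : EqOn f 0 (Icc a b) :=
    EqOn.of_subset_closure hzero hf continuousOn_const Ioo_subset_Icc_self
      (closure_Ioo hab.ne).superset
  exact hfy (hIcc hy)

theorem intervalIntegral_pos_of_continuousOn_of_nonneg {f : ℝ → ℝ} {a b x : ℝ}
    (hf : ContinuousOn f (Ioo a b)) (hfi : IntervalIntegrable f volume a b)
    (hnonneg : ∀ y ∈ Ioo a b, 0 ≤ f y) (hx : x ∈ Ioo a b) (hfx : f x ≠ 0) :
    0 < ∫ y in a..b, f y := by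
  rw [intervalIntegral.integral_of_le (hx.1.trans hx.2).le, integral_Ioc_eq_integral_Ioo,
    setIntegral_pos_iff_support_of_nonneg_ae
      (ae_restrict_of_forall_mem measurableSet_Ioo hnonneg) (hfi.1.mono_set Ioo_subset_Ioc_self)]
  have hopen : IsOpen (Ioo a b ∩ f ⁻¹' {0}ᶜ) :=
    hf.isOpen_inter_preimage isOpen_Ioo isOpen_compl_singleton
  rw [Function.support_eq_preimage, inter_comm]
  exact hopen.measure_pos volume ⟨x, hx, hfx⟩

theorem exists_norm_le_mul_of_hasDerivAt {E : Type*} [NormedAddCommGroup E] [NormedSpace ℝ E]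
    {u u' : ℝ → E} {c : ℝ} (hu : ∀ x ∈ Icc 0 c, HasDerivAt u (u' x) x)
    (hu' : ContinuousOn u' (Icc 0 c)) (hu0 : u 0 = 0) :
    ∃ K, ∀ y ∈ Icc 0 c, ‖u y‖ ≤ K * y := by
  obtain ⟨K, hK⟩ := isCompact_Icc.exists_bound_of_continuousOn hu'
  refine ⟨K, fun y hy => ?_⟩
  simpa [hu0] using norm_image_sub_le_of_norm_deriv_le_segment'
    (fun x hx => (hu x hx).hasDerivWithinAt) (fun x hx => hK x (Ico_subset_Icc_self hx)) y hy

theorem integrableOn_inv_mul_normSq_of_hasDerivAt {u u' : ℝ → ℂ} {c : ℝ}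
    (hu : ∀ x ∈ Icc 0 c, HasDerivAt u (u' x) x)
    (hu' : ContinuousOn u' (Icc 0 c)) (hu0 : u 0 = 0) :
    IntegrableOn (fun y => y⁻¹ * Complex.normSq (u y)) (Ioc 0 c) := by
  obtain ⟨K, hK⟩ := exists_norm_le_mul_of_hasDerivAt hu hu' hu0
  have hcont : ContinuousOn (fun y => y⁻¹ * Complex.normSq (u y)) (Ioc 0 c) :=
    (continuousOn_inv₀.mono fun y hy => hy.1.ne').mul
      (Complex.continuous_normSq.comp_continuousOn fun x hx =>
        (hu x (Ioc_subset_Icc_self hx)).continuousAt.continuousWithinAt)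
  refine IntegrableOn.of_bound measure_Ioc_lt_top
    (hcont.aestronglyMeasurable measurableSet_Ioc) (K ^ 2 * c)
    (ae_restrict_of_forall_mem measurableSet_Ioc fun y hy => ?_)
  rw [norm_mul, norm_inv, Real.norm_of_nonneg hy.1.le,
    Real.norm_of_nonneg (Complex.normSq_nonneg _), ← Complex.sq_norm, inv_mul_le_iff₀ hy.1]
  calc ‖u y‖ ^ 2 ≤ (K * y) ^ 2 :=
        pow_le_pow_left₀ (norm_nonneg _) (hK y (Ioc_subset_Icc_self hy)) 2
    _ = y * (K ^ 2 * y) := by ring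
    _ ≤ y * (K ^ 2 * c) :=
        mul_le_mul_of_nonneg_left (mul_le_mul_of_nonneg_left hy.2 (sq_nonneg K)) hy.1.le

theorem im_mul_integral_mul_normSq_eq_sub {a b : ℝ} (hab : a ≤ b) {p w : ℝ → ℝ} {u u' : ℝ → ℂ}
    {σ : ℂ} (hp : ContinuousOn p (Icc a b)) (hu : ContinuousOn u (Icc a b))
    (hu' : ContinuousOn u' (Icc a b)) (hderiv : ∀ x ∈ Ioo a b, HasDerivAt u (u' x) x)
    (hflux : ∀ x ∈ Ioo a b, HasDerivAt (fun y => (p y : ℂ) * u' y) (σ * w x * u x) x)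
    (hint : IntervalIntegrable (fun y => w y * Complex.normSq (u y)) volume a b) :
    σ.im * ∫ y in a..b, w y * Complex.normSq (u y) =
      (p b * u' b * conj (u b)).im - (p a * u' a * conj (u a)).im := by
  rw [← intervalIntegral.integral_const_mul]
  refine intervalIntegral.integral_eq_sub_of_hasDeriv_right_of_le
    (f := fun y => ((p y : ℂ) * u' y * conj (u y)).im) hab ?_ (fun x hx => ?_)
    (hint.const_mul _)
  · exact Complex.continuous_im.comp_continuousOn
      (((Complex.continuous_ofReal.comp_continuousOn hp).mul hu').mul
        (Complex.continuous_conj.comp_continuousOn hu))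
  · have h := Complex.imCLM.hasFDerivAt.comp_hasDerivAt x ((hflux x hx).mul (hderiv x hx).star)
    convert h.hasDerivWithinAt using 1
    · rfl
    · rw [Complex.imCLM_apply, Complex.star_def, mul_assoc _ (u x),
        Complex.mul_conj, mul_assoc _ (u' x), Complex.mul_conj, Complex.add_im, mul_assoc σ,
        ← Complex.ofReal_mul, Complex.im_mul_ofReal, ← Complex.ofReal_mul, Complex.ofReal_im,
        add_zero]

theorem ContDiffOn.hasDerivAt_and_hasDerivAt_deriv {E : Type*} [NormedAddCommGroup E]
    [NormedSpace ℝ E] {u : ℝ → E} {s : Set ℝ} {x : ℝ} (hu : ContDiffOn ℝ 2 u s) (hs : IsOpen s)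
    (hx : x ∈ s) : HasDerivAt u (deriv u x) x ∧ HasDerivAt (deriv u) (deriv (deriv u) x) x :=
  ⟨(hu.differentiableOn (by norm_num) x hx).differentiableAt (hs.mem_nhds hx) |>.hasDerivAt,
    ((hu.deriv_of_isOpen hs (by norm_num : (1 : WithTop ℕ∞) + 1 ≤ 2)).differentiableOn one_ne_zero
      x hx).differentiableAt (hs.mem_nhds hx) |>.hasDerivAt⟩

namespace Gribov

variable {lam lam' μ ρ' δ y : ℝ}

noncomputable def weight (ρ' δ y : ℝ) : ℝ := y⁻¹ * (Real.exp (ρ' * y) * (ρ' - y) ^ δ)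

noncomputable def coeff (lam' ρ' δ y : ℝ) : ℝ := -lam' * (Real.exp (ρ' * y) * (ρ' - y) ^ (1 + δ))

theorem weight_pos (hy : y ∈ Ioo 0 ρ') : 0 < weight ρ' δ y :=
  mul_pos (inv_pos.2 hy.1) (mul_pos (Real.exp_pos _) (Real.rpow_pos_of_pos (sub_pos.2 hy.2) _))

theorem continuousOn_weight : ContinuousOn (weight ρ' δ) (Ioo 0 ρ') := by
  refine (continuousOn_inv₀.mono fun y hy => hy.1.ne').mul
    ((Real.continuous_exp.comp (continuous_const_mul ρ')).continuousOn.mul ?_)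
  exact (continuousOn_const.sub continuousOn_id).rpow_const fun y hy =>
    Or.inl (sub_pos.2 hy.2).ne'

theorem coeff_self (hδ : 1 + δ ≠ 0) : coeff lam' ρ' δ ρ' = 0 := by
  simp [coeff, Real.zero_rpow hδ]

theorem continuous_coeff (hδ : 0 ≤ 1 + δ) : Continuous (coeff lam' ρ' δ) := by
  unfold coeff
  have := Real.continuous_rpow_const hδ
  fun_prop

theorem coeff_eq_weight_mul (hρ' : lam' * ρ' = lam) (hy : y ∈ Ioo 0 ρ') :
    coeff lam' ρ' δ y = weight ρ' δ y * (lam' * y ^ 2 - lam * y) := by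
  rw [coeff, weight, Real.rpow_add (sub_pos.2 hy.2), Real.rpow_one, ← hρ']
  field_simp [hy.1.ne']
  ring

theorem hasDerivAt_coeff (hlam : lam ≠ 0) (hρ' : lam' * ρ' = lam)
    (hδ : 1 + δ = ρ' * (μ / lam + ρ')) (hy : y ∈ Ioo 0 ρ') :
    HasDerivAt (coeff lam' ρ' δ) (weight ρ' δ y * (lam * y ^ 2 + μ * y)) y := by
  have hexp : HasDerivAt (fun z => Real.exp (ρ' * z)) (Real.exp (ρ' * y) * ρ') y := by
    simpa using ((hasDerivAt_id y).const_mul ρ').exp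
  have hpow : HasDerivAt (fun z => (ρ' - z) ^ (1 + δ))
      ((1 + δ) * (ρ' - y) ^ (1 + δ - 1) * -1) y :=
    (Real.hasDerivAt_rpow_const (Or.inl (sub_pos.2 hy.2).ne')).comp y
      ((hasDerivAt_id y).const_sub ρ')
  refine ((hexp.mul hpow).const_mul (-lam')).congr_deriv ?_
  have key : lam' * (1 + δ - ρ' * (ρ' - y)) = lam * y + μ := by
    calc lam' * (1 + δ - ρ' * (ρ' - y)) = lam' * ρ' * (μ / lam + y) := by rw [hδ]; ring
      _ = lam * y + μ := by rw [hρ']; field_simp; ring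
  rw [weight, add_sub_cancel_left, Real.rpow_add (sub_pos.2 hy.2), Real.rpow_one]
  field_simp [hy.1.ne']
  linear_combination (ρ' - y) ^ δ * key

theorem hasDerivAt_coeff_mul_deriv {u : ℝ → ℂ} (hlam : lam ≠ 0) (hρ' : lam' * ρ' = lam)
    (hδ : 1 + δ = ρ' * (μ / lam + ρ')) (hy : y ∈ Ioo 0 ρ')
    (hu : HasDerivAt (deriv u) (deriv (deriv u) y) y) :
    HasDerivAt (fun z => (coeff lam' ρ' δ z : ℂ) * deriv u z)
      (weight ρ' δ y * Mop lam' lam μ u y) y := by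
  refine ((hasDerivAt_coeff hlam hρ' hδ hy).ofReal_comp.mul hu).congr_deriv ?_
  rw [Mop, coeff_eq_weight_mul hρ' hy]
  push_cast
  ring

theorem intervalIntegrable_weight_mul_normSq {u u' : ℝ → ℂ} (hρ' : 0 ≤ ρ') (hδ : 0 ≤ δ)
    (hu : ∀ x ∈ Icc 0 ρ', HasDerivAt u (u' x) x) (hu' : ContinuousOn u' (Icc 0 ρ'))
    (hu0 : u 0 = 0) :
    IntervalIntegrable (fun y => weight ρ' δ y * Complex.normSq (u y)) volume 0 ρ' := by
  have hcont : Continuous fun y => Real.exp (ρ' * y) * (ρ' - y) ^ δ := by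
    have := Real.continuous_rpow_const hδ
    fun_prop
  rw [intervalIntegrable_iff_integrableOn_Ioc_of_le hρ']
  refine ((integrableOn_inv_mul_normSq_of_hasDerivAt hu hu' hu0).continuousOn_mul_of_subset
    hcont.continuousOn isCompact_Icc measurableSet_Ioc Ioc_subset_Icc_self).congr_fun
    (fun y _ => ?_) measurableSet_Ioc
  rw [weight]
  ring

theorem integral_weight_mul_normSq_pos {u : ℝ → ℂ} (hρ' : 0 < ρ')
    (hu : ContinuousOn u (Icc 0 ρ'))
    (hint : IntervalIntegrable (fun y => weight ρ' δ y * Complex.normSq (u y)) volume 0 ρ')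
    (hne : ∃ y ∈ Icc 0 ρ', u y ≠ 0) :
    0 < ∫ y in 0..ρ', weight ρ' δ y * Complex.normSq (u y) := by
  obtain ⟨x, hx, hux⟩ := exists_mem_Ioo_ne_zero_of_continuousOn hρ' hu hne
  refine intervalIntegral_pos_of_continuousOn_of_nonneg ?_ hint
    (fun y hy => mul_nonneg (weight_pos hy).le (Complex.normSq_nonneg _)) hx
    (mul_pos (weight_pos hx) (Complex.normSq_pos.2 hux)).ne'
  exact continuousOn_weight.mul (Complex.continuous_normSq.comp_continuousOn
    (hu.mono Ioo_subset_Icc_self))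

end Gribov

open Gribov in
theorem regularized_gribov_eigenvalues_real_general (lam lam' μ : ℝ)
    (hlam : 0 < lam) (hlam' : 0 < lam')
    (ρ' : ℝ) (hρ' : ρ' = lam / lam') (hge : 1 ≤ ρ' * (μ / lam + ρ'))
    (σ : ℂ) (u : ℝ → ℂ) (a b : ℝ) (ha : a < 0) (hb : ρ' < b)
    (hu : ContDiffOn ℝ 2 u (Set.Ioo a b))
    (hu0 : u 0 = 0) (hne : ∃ y ∈ Set.Icc (0 : ℝ) ρ', u y ≠ 0)
    (heq : ∀ y ∈ Set.Icc (0 : ℝ) ρ', Mop lam' lam μ u y = σ * u y) :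
    σ.im = 0 := by
  have hρ'pos : 0 < ρ' := hρ' ▸ div_pos hlam hlam'
  have hlamρ : lam' * ρ' = lam := by rw [hρ']; field_simp
  set δ := ρ' * (μ / lam + ρ') - 1
  have hδ : 0 ≤ δ := by linarith
  have hδ' : 1 + δ = ρ' * (μ / lam + ρ') := by ring
  have hsub : Icc 0 ρ' ⊆ Ioo a b := Icc_subset_Ioo ha hb
  have hu1 x (hx : x ∈ Icc 0 ρ') := (hu.hasDerivAt_and_hasDerivAt_deriv isOpen_Ioo (hsub hx)).1
  have hu2 x (hx : x ∈ Icc 0 ρ') := (hu.hasDerivAt_and_hasDerivAt_deriv isOpen_Ioo (hsub hx)).2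
  have hcont : ContinuousOn u (Icc 0 ρ') := fun x hx =>
    (hu1 x hx).continuousAt.continuousWithinAt
  have hcont' : ContinuousOn (deriv u) (Icc 0 ρ') := fun x hx =>
    (hu2 x hx).continuousAt.continuousWithinAt
  have hint := intervalIntegrable_weight_mul_normSq hρ'pos.le hδ hu1 hcont' hu0
  have hflux : ∀ x ∈ Ioo 0 ρ', HasDerivAt (fun y => (coeff lam' ρ' δ y : ℂ) * deriv u y)
      (σ * weight ρ' δ x * u x) x := by
    intro x hx
    have hx' := Ioo_subset_Icc_self hx
    have := hasDerivAt_coeff_mul_deriv hlam.ne' hlamρ hδ' hx (hu2 x hx')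
    rwa [heq x hx', ← mul_assoc, mul_comm (weight ρ' δ x : ℂ)] at this
  have hI : σ.im * ∫ y in 0..ρ', weight ρ' δ y * Complex.normSq (u y) = 0 := by
    rw [im_mul_integral_mul_normSq_eq_sub hρ'pos.le (continuous_coeff (by linarith)).continuousOn
      hcont hcont' (fun x hx => hu1 x (Ioo_subset_Icc_self hx)) hflux hint,
      coeff_self (by linarith), hu0]
    simp
  exact (mul_eq_zero.1 hI).resolve_right
    (integral_weight_mul_normSq_pos hρ'pos hcont hint hne).ne'

/-- If `ρ'(μ/λ + ρ') ≥ 1` then every eigenvalue `σ` of the regularized Gribov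
operator restricted to `[0, ρ']` (with eigenfunction vanishing at `0` but not
identically zero) is real. -/
theorem regularized_gribov_eigenvalues_real (lam lam' μ : ℝ)
    (hlam : 0 < lam) (hlam' : 0 < lam') (hμ : 0 < μ)
    (ρ' : ℝ) (hρ' : ρ' = lam / lam') (hge : 1 ≤ ρ' * (μ / lam + ρ'))
    (σ : ℂ) (u : ℝ → ℂ) (a b : ℝ) (ha : a < 0) (hb : ρ' < b)
    (hu : ContDiffOn ℝ 2 u (Set.Ioo a b))
    (hu0 : u 0 = 0) (hne : ∃ y ∈ Set.Icc (0 : ℝ) ρ', u y ≠ 0)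
    (heq : ∀ y ∈ Set.Icc (0 : ℝ) ρ', Mop lam' lam μ u y = σ * u y) :
    σ.im = 0 :=
  regularized_gribov_eigenvalues_real_general lam lam' μ hlam hlam' ρ' hρ' hge σ u a b ha hb hu hu0
    hne heq
end

section
/- Fix λ > 0, λ' > 0, μ > 0, set ρ' = λ/λ', δ = ρ'(μ/λ + ρ') − 1 and assume ρ'(μ/λ + ρ') ≥ 1. Let σ ∈ ℂ and let u, v : ℝ → ℂ be twice continuously differentiable on an open interval containing [0, ρ'], with u(0) = v(0) = 0, and suppose both satisfy the same eigenvalue equation (λ'y² − λy)w''(y) + (λy² + μy)w'(y) = σ·w(y) for all y ∈ [0, ρ']. Then the Wronskian vanishes identically: v(y)·u'(y) − u(y)·v'(y) = 0 for all y ∈ [0, ρ']. In particular any two such eigenfunctions are linearly dependent, so each eigenvalue is geometrically simple. -/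
/-!
By Abel's identity the Wronskian `W = v u' - u v'` of two solutions of `p₂ w'' + p₁ w' = σ w`,
where `p₂ y = λ'y² − λy = λ'y(y − ρ')` and `p₁ y = λy² + μy`, satisfies `p₂ W' + p₁ W = 0`.
On `(0, ρ')` this reads `W' = g W` with `g y = c/(ρ' − y) − ρ'` and `c = (λρ' + μ)/λ' = δ + 1`;
at `0` it holds as well, since `u 0 = v 0 = 0` makes both `W` and `W' = v u'' − u v''` vanish.
Hence `W · exp(ρ'y + c log(ρ' − y)) = W · p/λ'` has zero derivative on `[0, ρ')` and vanishes
at `0`, so `W = 0` there, and at `ρ'` by continuity.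
-/

open Set

noncomputable def wronskian (u v : ℝ → ℂ) (y : ℝ) : ℂ :=
  v y * deriv u y - u y * deriv v y

theorem hasDerivAt_wronskian_of_contDiffOn {u v : ℝ → ℂ} {s : Set ℝ} {y : ℝ}
    (hs : IsOpen s) (hu : ContDiffOn ℝ 2 u s) (hv : ContDiffOn ℝ 2 v s) (hy : y ∈ s) :
    HasDerivAt (wronskian u v) (v y * deriv (deriv u) y - u y * deriv (deriv v) y) y := by
  have hasDerivAt_of {w : ℝ → ℂ} (hw : ContDiffOn ℝ 2 w s) :
      HasDerivAt w (deriv w y) y ∧ HasDerivAt (deriv w) (deriv (deriv w) y) y :=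
    ⟨((hw.differentiableOn two_ne_zero).differentiableAt (hs.mem_nhds hy)).hasDerivAt,
      (((hw.deriv_of_isOpen hs (by norm_num)).differentiableOn one_ne_zero).differentiableAt
        (hs.mem_nhds hy)).hasDerivAt⟩
  obtain ⟨hu₁, hu₂⟩ := hasDerivAt_of hu
  obtain ⟨hv₁, hv₂⟩ := hasDerivAt_of hv
  exact ((hv₁.mul hu₂).sub (hu₁.mul hv₂)).congr_deriv (by ring)

theorem eqOn_zero_of_hasDerivAt_eq_mul {W g G : ℝ → ℂ} {s t : ℝ}
    (hG : ∀ x ∈ Ico s t, HasDerivAt G (g x) x)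
    (hW : ∀ x ∈ Ico s t, HasDerivAt W (g x * W x) x) (hs : W s = 0) :
    EqOn W 0 (Ico s t) := by
  have hF : ∀ x ∈ Ico s t, HasDerivAt (fun x => W x * Complex.exp (-G x)) 0 x := fun x hx =>
    ((hW x hx).mul (hG x hx).neg.cexp).congr_deriv (by ring)
  intro x hx
  have hconst := constant_of_has_deriv_right_zero (a := s) (b := x)
    (fun z hz => (hF z ⟨hz.1, hz.2.trans_lt hx.2⟩).continuousAt.continuousWithinAt)
    (fun z hz => (hF z ⟨hz.1, hz.2.trans hx.2⟩).hasDerivWithinAt) x (right_mem_Icc.2 hx.1)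
  simpa [hs, Complex.exp_ne_zero] using hconst

theorem Mop_abel_identity {lam' lam μ : ℝ} {σ : ℂ} {u v : ℝ → ℂ} {y : ℝ}
    (hu : Mop lam' lam μ u y = σ * u y) (hv : Mop lam' lam μ v y = σ * v y) :
    ((lam' * y ^ 2 - lam * y : ℝ) : ℂ) * (v y * deriv (deriv u) y - u y * deriv (deriv v) y)
      + ((lam * y ^ 2 + μ * y : ℝ) : ℂ) * wronskian u v y = 0 := by
  unfold Mop at hu hv
  unfold wronskian
  linear_combination v y * hu - u y * hv

theorem eq_mul_of_gribov_abel_identity {lam' lam μ ρ' y : ℝ} {W W' : ℂ} (hlam' : lam' ≠ 0)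
    (hlam : lam = lam' * ρ') (hy : y ∈ Ioo 0 ρ')
    (h : ((lam' * y ^ 2 - lam * y : ℝ) : ℂ) * W' + ((lam * y ^ 2 + μ * y : ℝ) : ℂ) * W = 0) :
    W' = (((lam * ρ' + μ) / lam' / (ρ' - y) - ρ' : ℝ) : ℂ) * W := by
  have hρy : ρ' - y ≠ 0 := sub_ne_zero.2 hy.2.ne'
  have hp₂ : lam' * y ^ 2 - lam * y ≠ 0 := by
    rw [hlam, show lam' * y ^ 2 - lam' * ρ' * y = -(lam' * y * (ρ' - y)) by ring]
    exact neg_ne_zero.2 (mul_ne_zero (mul_ne_zero hlam' hy.1.ne') hρy)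
  have hg : (lam' * y ^ 2 - lam * y) * ((lam * ρ' + μ) / lam' / (ρ' - y) - ρ')
      = -(lam * y ^ 2 + μ * y) := by
    rw [hlam]
    field_simp
    ring
  have hgℂ := congrArg ((↑) : ℝ → ℂ) hg
  refine mul_left_cancel₀ (Complex.ofReal_ne_zero.2 hp₂) ?_
  push_cast at h hgℂ ⊢
  linear_combination h - W * hgℂ

theorem hasDerivAt_neg_mul_add_mul_log_sub {c ρ y : ℝ} (hy : y < ρ) :
    HasDerivAt (fun x => -(ρ * x + c * Real.log (ρ - x))) (c / (ρ - y) - ρ) y := by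
  have hlog := ((hasDerivAt_id y).const_sub ρ).log (sub_ne_zero.2 hy.ne')
  exact ((((hasDerivAt_id y).const_mul ρ).add (hlog.const_mul c)).neg).congr_deriv (by
    simp only [id]
    ring)

theorem regularized_gribov_eigenvalues_simple_general (lam lam' μ : ℝ)
    (hlam : 0 < lam) (hlam' : 0 < lam')
    (ρ' : ℝ) (hρ' : ρ' = lam / lam')
    (σ : ℂ) (u v : ℝ → ℂ) (a b : ℝ) (ha : a < 0) (hb : ρ' < b)
    (hu : ContDiffOn ℝ 2 u (Set.Ioo a b)) (hv : ContDiffOn ℝ 2 v (Set.Ioo a b))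
    (hu0 : u 0 = 0) (hv0 : v 0 = 0)
    (hequ : ∀ y ∈ Set.Icc (0 : ℝ) ρ', Mop lam' lam μ u y = σ * u y)
    (heqv : ∀ y ∈ Set.Icc (0 : ℝ) ρ', Mop lam' lam μ v y = σ * v y) :
    ∀ y ∈ Set.Icc (0 : ℝ) ρ', v y * deriv u y - u y * deriv v y = 0 := by
  have hρ'pos : 0 < ρ' := hρ' ▸ div_pos hlam hlam'
  have hlam_eq : lam = lam' * ρ' := by rw [hρ']; field_simp
  have hW0 : wronskian u v 0 = 0 := by simp [wronskian, hu0, hv0]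
  have hW' : ∀ y ∈ Icc 0 ρ', HasDerivAt (wronskian u v)
      (v y * deriv (deriv u) y - u y * deriv (deriv v) y) y := fun y hy =>
    hasDerivAt_wronskian_of_contDiffOn isOpen_Ioo hu hv (Icc_subset_Ioo ha hb hy)
  have hode : ∀ y ∈ Ico 0 ρ', HasDerivAt (wronskian u v)
      (((lam * ρ' + μ) / lam' / (ρ' - y) - ρ' : ℝ) * wronskian u v y) y := by
    intro y hy
    refine (hW' y (Ico_subset_Icc_self hy)).congr_deriv ?_
    rcases hy.1.eq_or_lt with rfl | hy0
    · simp [hW0, hu0, hv0]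
    · have hyI := Ico_subset_Icc_self hy
      exact eq_mul_of_gribov_abel_identity hlam'.ne' hlam_eq ⟨hy0, hy.2⟩
        (Mop_abel_identity (hequ y hyI) (heqv y hyI))
  have hW_Ico : EqOn (wronskian u v) 0 (Ico 0 ρ') :=
    eqOn_zero_of_hasDerivAt_eq_mul
      (fun y hy => (hasDerivAt_neg_mul_add_mul_log_sub hy.2).ofReal_comp) hode hW0
  have hcont : ContinuousOn (wronskian u v) (Icc 0 ρ') := fun y hy =>
    (hW' y hy).continuousAt.continuousWithinAt
  exact hW_Ico.of_subset_closure hcont continuousOn_const Ico_subset_Icc_self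
    (closure_Ico hρ'pos.ne).ge

/-- If `ρ'(μ/λ + ρ') ≥ 1` and `u, v` are two eigenfunctions of the regularized
Gribov operator on `[0, ρ']` for the same eigenvalue `σ`, both vanishing at `0`,
then their Wronskian `v·u' − u·v'` vanishes identically on `[0, ρ']`; in
particular each eigenvalue is geometrically simple. -/
theorem regularized_gribov_eigenvalues_simple (lam lam' μ : ℝ)
    (hlam : 0 < lam) (hlam' : 0 < lam') (hμ : 0 < μ)
    (ρ' : ℝ) (hρ' : ρ' = lam / lam') (hge : 1 ≤ ρ' * (μ / lam + ρ'))
    (σ : ℂ) (u v : ℝ → ℂ) (a b : ℝ) (ha : a < 0) (hb : ρ' < b)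
    (hu : ContDiffOn ℝ 2 u (Set.Ioo a b)) (hv : ContDiffOn ℝ 2 v (Set.Ioo a b))
    (hu0 : u 0 = 0) (hv0 : v 0 = 0)
    (hequ : ∀ y ∈ Set.Icc (0 : ℝ) ρ', Mop lam' lam μ u y = σ * u y)
    (heqv : ∀ y ∈ Set.Icc (0 : ℝ) ρ', Mop lam' lam μ v y = σ * v y) :
    ∀ y ∈ Set.Icc (0 : ℝ) ρ', v y * deriv u y - u y * deriv v y = 0 :=
  regularized_gribov_eigenvalues_simple_general lam lam' μ hlam hlam' ρ' hρ' σ u v a b ha hb hu hv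
    hu0 hv0 hequ heqv
end

section
/- Let μ, λ ∈ ℝ. There exists a constant C > 0 (depending only on μ and λ) such that for every finitely supported sequence a : ℕ → ℂ, ‖H_{μ,λ}a‖ ≤ C · ‖Ĝa‖^{1/2} · ‖a‖^{1/2}, i.e. the Gribov operator H_{μ,λ} is 1/2-subordinate to Ĝ = A*³A³ + I. -/
/-- The diagonal matrix of `Ĝ = A*³A³ + I`: `(Ĝa)ₙ = (n(n−1)(n−2)+1)·aₙ`. -/
noncomputable def gHat (a : ℕ → ℂ) : ℕ → ℂ := fun n =>
  ((n * (n - 1) * (n - 2) + 1 : ℕ) : ℂ) * a n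

/-!
Column `m` of `H_{μ,λ}` has squared entries `λ²m²(m+1)`, `μ²m²` and `λ²(m-1)²m`, bounded by
`λ²`, `μ²` and `λ²` times `m²(m+1)`. As the matrix is tridiagonal, `‖x + y + z‖² ≤ 3(‖x‖² + ‖y‖² + ‖z‖²)`
and shifts of the summation index give `‖Ha‖² ≤ 3(2λ² + μ²) ∑ m²(m+1)|aₘ|²`. The cubic weight is
at most `12(m(m-1)(m-2) + 1)`, twelve times the diagonal of `Ĝ`, so
`‖Ha‖² ≤ 36(2λ² + μ²) ∑ |(Ĝa)ₘ||aₘ| ≤ 36(2λ² + μ²) ‖Ĝa‖ ‖a‖` by Cauchy–Schwarz.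
-/

open Finset

lemma norm_add₃_sq_le {E : Type*} [SeminormedAddCommGroup E] (x y z : E) :
    ‖x + y + z‖ ^ 2 ≤ 3 * (‖x‖ ^ 2 + ‖y‖ ^ 2 + ‖z‖ ^ 2) := by
  have hsum : ‖x + y + z‖ ≤ ‖x‖ + ‖y‖ + ‖z‖ := norm_add₃_le
  nlinarith [norm_nonneg (x + y + z), sq_nonneg (‖x‖ - ‖y‖), sq_nonneg (‖y‖ - ‖z‖),
    sq_nonneg (‖x‖ - ‖z‖)]

lemma sum_range_comp_pred_le (B : ℕ → ℝ) (hB : ∀ n, 0 ≤ B n) (h0 : B 0 = 0) (M : ℕ) :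
    ∑ n ∈ range M, B (n - 1) ≤ ∑ n ∈ range M, B n := by
  cases M with
  | zero => simp
  | succ M =>
    rw [sum_range_succ', sum_range_succ]
    simpa [h0] using hB M

lemma sum_range_comp_succ_eq (B : ℕ → ℝ) (h0 : B 0 = 0) {M : ℕ} (hM : B M = 0) :
    ∑ n ∈ range M, B (n + 1) = ∑ n ∈ range M, B n := by
  have := sum_range_succ' B M
  rw [sum_range_succ, hM, h0] at this
  linarith

lemma l2norm_nonneg (a : ℕ → ℂ) : 0 ≤ l2norm a := Real.sqrt_nonneg _

lemma l2norm_eq_sqrt_sum_range {b : ℕ → ℂ} {N : ℕ} (hb : ∀ n, N ≤ n → b n = 0) :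
    l2norm b = √(∑ n ∈ range N, ‖b n‖ ^ 2) := by
  rw [l2norm, tsum_eq_sum]
  intro n hn
  simp [hb n (by simpa using hn)]

lemma sq_mul_succ_le_gHat_coeff (m : ℕ) :
    (m : ℝ) ^ 2 * (m + 1) ≤ 12 * ((m * (m - 1) * (m - 2) + 1 : ℕ) : ℝ) := by
  have key : m ^ 2 * (m + 1) ≤ 12 * (m * (m - 1) * (m - 2) + 1) := by
    match m with
    | 0 | 1 | 2 => norm_num
    | k + 3 =>
      rw [show k + 3 - 1 = k + 2 by omega, show k + 3 - 2 = k + 1 by omega]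
      nlinarith [sq_nonneg k]
  exact_mod_cast key

noncomputable def cubicWeightedSq (a : ℕ → ℂ) (m : ℕ) : ℝ := (m : ℝ) ^ 2 * (m + 1) * ‖a m‖ ^ 2

lemma cubicWeightedSq_nonneg (a : ℕ → ℂ) (m : ℕ) : 0 ≤ cubicWeightedSq a m := by
  unfold cubicWeightedSq; positivity

lemma cubicWeightedSq_zero (a : ℕ → ℂ) : cubicWeightedSq a 0 = 0 := by
  simp [cubicWeightedSq]

lemma cubicWeightedSq_le_norm_gHat_mul_norm (a : ℕ → ℂ) (m : ℕ) :
    cubicWeightedSq a m ≤ 12 * (‖gHat a m‖ * ‖a m‖) := by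
  have hnorm : ‖gHat a m‖ = ((m * (m - 1) * (m - 2) + 1 : ℕ) : ℝ) * ‖a m‖ := by
    rw [gHat, norm_mul, Complex.norm_natCast]
  rw [cubicWeightedSq, hnorm]
  nlinarith [mul_le_mul_of_nonneg_right (sq_mul_succ_le_gHat_coeff m) (sq_nonneg ‖a m‖)]

lemma norm_sq_gribovH_le (μ lam : ℝ) (a : ℕ → ℂ) (n : ℕ) :
    ‖gribovH μ lam a n‖ ^ 2 ≤ 3 * (lam ^ 2 * cubicWeightedSq a (n - 1)
      + μ ^ 2 * cubicWeightedSq a n + lam ^ 2 * cubicWeightedSq a (n + 1)) := by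
  rcases eq_or_ne n 0 with rfl | hn
  · rw [gribovH, if_pos rfl, norm_zero, zero_pow two_ne_zero]
    unfold cubicWeightedSq
    positivity
  rw [gribovH, if_neg hn]
  refine (norm_add₃_sq_le _ _ _).trans ?_
  simp only [cubicWeightedSq, norm_mul, Complex.norm_I, Complex.norm_real, Complex.norm_natCast,
    Real.norm_eq_abs, one_mul, mul_pow, sq_abs, Real.sq_sqrt (Nat.cast_nonneg _),
    Real.sq_sqrt (by positivity : (0 : ℝ) ≤ n + 1)]
  have hpred : ((n - 1 : ℕ) : ℝ) + 1 = n := by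
    rw [Nat.cast_sub (Nat.one_le_iff_ne_zero.mpr hn)]; ring
  rw [hpred]
  push_cast
  have hl := sq_nonneg lam
  have hm := sq_nonneg μ
  have hA := sq_nonneg ‖a n‖
  have hA' := sq_nonneg ‖a (n + 1)‖
  have hn' : (0 : ℝ) ≤ n := n.cast_nonneg
  gcongr 3 * (?_ + ?_ + ?_)
  · linarith
  · nlinarith [mul_nonneg (mul_nonneg hm hA) (pow_nonneg hn' 3)]
  · nlinarith [mul_nonneg (mul_nonneg hl hA') (by positivity : (0 : ℝ) ≤ 3 * n ^ 2 + 5 * n + 2)]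

lemma sum_norm_sq_gribovH_le (μ lam : ℝ) {a : ℕ → ℂ} {N : ℕ} (ha : ∀ n, N ≤ n → a n = 0) :
    ∑ n ∈ range (N + 1), ‖gribovH μ lam a n‖ ^ 2
      ≤ 36 * (2 * lam ^ 2 + μ ^ 2) * ∑ n ∈ range (N + 1), ‖gHat a n‖ * ‖a n‖ := by
  set B := cubicWeightedSq a
  have hB : ∀ n, 0 ≤ B n := cubicWeightedSq_nonneg a
  have hB0 : B 0 = 0 := cubicWeightedSq_zero a
  have hBN : B (N + 1) = 0 := by simp [B, cubicWeightedSq, ha (N + 1) (by omega)]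
  calc ∑ n ∈ range (N + 1), ‖gribovH μ lam a n‖ ^ 2
      ≤ ∑ n ∈ range (N + 1), 3 * (lam ^ 2 * B (n - 1) + μ ^ 2 * B n + lam ^ 2 * B (n + 1)) :=
        sum_le_sum fun n _ => norm_sq_gribovH_le μ lam a n
    _ = 3 * (lam ^ 2 * ∑ n ∈ range (N + 1), B (n - 1) + μ ^ 2 * ∑ n ∈ range (N + 1), B n
          + lam ^ 2 * ∑ n ∈ range (N + 1), B (n + 1)) := by
        rw [← mul_sum, sum_add_distrib, sum_add_distrib, ← mul_sum, ← mul_sum, ← mul_sum]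
    _ ≤ 3 * (2 * lam ^ 2 + μ ^ 2) * ∑ n ∈ range (N + 1), B n := by
        rw [sum_range_comp_succ_eq B hB0 hBN]
        have := mul_le_mul_of_nonneg_left (sum_range_comp_pred_le B hB hB0 (N + 1)) (sq_nonneg lam)
        nlinarith
    _ ≤ 3 * (2 * lam ^ 2 + μ ^ 2) * ∑ n ∈ range (N + 1), 12 * (‖gHat a n‖ * ‖a n‖) := by
        gcongr with n
        exact cubicWeightedSq_le_norm_gHat_mul_norm a n
    _ = 36 * (2 * lam ^ 2 + μ ^ 2) * ∑ n ∈ range (N + 1), ‖gHat a n‖ * ‖a n‖ := by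
        rw [← mul_sum]; ring

lemma sq_l2norm_gribovH_le (μ lam : ℝ) {a : ℕ → ℂ} {N : ℕ} (ha : ∀ n, N ≤ n → a n = 0) :
    l2norm (gribovH μ lam a) ^ 2 ≤ 36 * (2 * lam ^ 2 + μ ^ 2) * l2norm (gHat a) * l2norm a := by
  have ha' : ∀ n, N + 1 ≤ n → a n = 0 := fun n hn => ha n (by omega)
  have hH : ∀ n, N + 1 ≤ n → gribovH μ lam a n = 0 := fun n hn => by
    simp [gribovH, ha (n - 1) (by omega), ha n (by omega), ha (n + 1) (by omega)]
  have hG : ∀ n, N + 1 ≤ n → gHat a n = 0 := fun n hn => by simp [gHat, ha' n hn]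
  rw [l2norm_eq_sqrt_sum_range hH, l2norm_eq_sqrt_sum_range hG, l2norm_eq_sqrt_sum_range ha',
    Real.sq_sqrt (sum_nonneg fun _ _ => sq_nonneg _), mul_assoc]
  exact (sum_norm_sq_gribovH_le μ lam ha).trans <|
    mul_le_mul_of_nonneg_left (Real.sum_mul_le_sqrt_mul_sqrt _ _ _) (by positivity)

lemma le_mul_sqrt_mul_sqrt_of_sq_le {x y z c : ℝ} (hx : 0 ≤ x) (hy : 0 ≤ y) (hc : 0 ≤ c)
    (h : x ^ 2 ≤ c ^ 2 * y * z) : x ≤ c * √y * √z := by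
  calc x = √(x ^ 2) := (Real.sqrt_sq hx).symm
    _ ≤ √(c ^ 2 * y * z) := Real.sqrt_le_sqrt h
    _ = c * √y * √z := by
      rw [Real.sqrt_mul (by positivity), Real.sqrt_mul (by positivity), Real.sqrt_sq hc]

/-- `H_{μ,λ}` is 1/2-subordinate to `Ĝ = A*³A³ + I`:
there is `C > 0` with `‖H_{μ,λ}a‖ ≤ C·‖Ĝa‖^{1/2}·‖a‖^{1/2}` for all finitely
supported `a`. -/
theorem gribovH_half_subordinate_gHat (μ lam : ℝ) :
    ∃ C > 0, ∀ a : ℕ → ℂ, (Function.support a).Finite →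
      l2norm (gribovH μ lam a) ≤
        C * Real.sqrt (l2norm (gHat a)) * Real.sqrt (l2norm a) := by
  refine ⟨6 * √(2 * lam ^ 2 + μ ^ 2 + 1), by positivity, fun a hfin => ?_⟩
  obtain ⟨N, hN⟩ := hfin.bddAbove
  have ha : ∀ n, N + 1 ≤ n → a n = 0 := fun n hn => by
    by_contra h
    have : n ≤ N := hN h
    omega
  refine le_mul_sqrt_mul_sqrt_of_sq_le (l2norm_nonneg _) (l2norm_nonneg _) (by positivity) ?_
  calc l2norm (gribovH μ lam a) ^ 2
      ≤ 36 * (2 * lam ^ 2 + μ ^ 2) * l2norm (gHat a) * l2norm a := sq_l2norm_gribovH_le μ lam ha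
    _ ≤ (6 * √(2 * lam ^ 2 + μ ^ 2 + 1)) ^ 2 * l2norm (gHat a) * l2norm a := by
      have := l2norm_nonneg (gHat a)
      have := l2norm_nonneg a
      rw [mul_pow, Real.sq_sqrt (by positivity)]
      gcongr ?_ * _ * _
      linarith
end

section
/- Let μ, λ ∈ ℝ and let β be a real number with 3 ≤ β < 4. For every ε > 0 there exists a constant C_ε > 0 such that for every finitely supported sequence a : ℕ → ℂ, ‖H_{μ,λ}a‖ ≤ ε · ‖Ĝa‖^{2/β} · ‖a‖^{1 − 2/β} + C_ε · ‖a‖. -/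
/-! Row `n` of `H_{μ,λ}` has entries of size `O(n^{3/2})` and `(n + 1)³ ≤ 27 (n(n-1)(n-2) + 1)`,
so `‖H a‖² ≤ 243 (μ² + λ²) ∑ ‖(Ĝa)ₙ‖ ‖aₙ‖ ≤ 243 (μ² + λ²) ‖Ĝa‖ ‖a‖` by Cauchy–Schwarz.
Because `2/β > 1/2`, the resulting bound `K √(‖Ĝa‖ ‖a‖)` is absorbed: if `‖Ĝa‖ ≤ T ‖a‖` it is at
most `K √T ‖a‖`, and otherwise, for `T = (K/ε)^{1/(2/β - 1/2)}`, the factor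
`(‖Ĝa‖ / ‖a‖)^{2/β - 1/2} ≥ K/ε` bounds it by `ε ‖Ĝa‖^{2/β} ‖a‖^{1-2/β}`. -/

lemma exists_mul_sqrt_mul_le_rpow_mul_rpow_add {p K ε : ℝ} (hp : 1 / 2 < p) (hK : 0 ≤ K)
    (hε : 0 < ε) :
    ∃ C > 0, ∀ X Y : ℝ, 0 ≤ X → 0 ≤ Y →
      K * √(X * Y) ≤ ε * X ^ p * Y ^ (1 - p) + C * Y := by
  obtain ⟨θ, hθ, rfl⟩ : ∃ θ > 0, p = 1 / 2 + θ := ⟨p - 1 / 2, by linarith, by ring⟩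
  set T := (K / ε) ^ θ⁻¹
  have hT : 0 ≤ T := by positivity
  refine ⟨K * √T + 1, by positivity, fun X Y hX hY => ?_⟩
  have hεXY : 0 ≤ ε * X ^ (1 / 2 + θ) * Y ^ (1 - (1 / 2 + θ)) := by positivity
  rcases le_or_gt X (T * Y) with hXT | hTX
  · calc K * √(X * Y) ≤ K * √(T * Y * Y) := by gcongr
      _ = K * √T * Y := by rw [mul_assoc, Real.sqrt_mul hT, Real.sqrt_mul_self hY, mul_assoc]
      _ ≤ (K * √T + 1) * Y := by nlinarith
      _ ≤ _ := le_add_of_nonneg_left hεXY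
  rcases hY.eq_or_lt with rfl | hYpos
  · simpa using hεXY
  have hXpos : 0 < X := (mul_nonneg hT hY).trans_lt hTX
  have hKY : K * Y ^ θ ≤ ε * X ^ θ := by
    have : (T * Y) ^ θ ≤ X ^ θ := Real.rpow_le_rpow (by positivity) hTX.le hθ.le
    rw [Real.mul_rpow hT hY, Real.rpow_inv_rpow (by positivity) hθ.ne'] at this
    rwa [div_mul_eq_mul_div, div_le_iff₀ hε, mul_comm (X ^ θ)] at this
  calc K * √(X * Y) = K * Y ^ θ * (X ^ (1 / 2 : ℝ) * Y ^ (1 - (1 / 2 + θ))) := by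
        have hY12 : Y ^ (1 / 2 : ℝ) = Y ^ θ * Y ^ (1 - (1 / 2 + θ)) := by
          rw [← Real.rpow_add hYpos]
          ring_nf
        rw [Real.sqrt_mul hX, Real.sqrt_eq_rpow, Real.sqrt_eq_rpow, hY12]
        ring
    _ ≤ ε * X ^ θ * (X ^ (1 / 2 : ℝ) * Y ^ (1 - (1 / 2 + θ))) := by gcongr
    _ = ε * X ^ (1 / 2 + θ) * Y ^ (1 - (1 / 2 + θ)) := by
        rw [Real.rpow_add hXpos]
        ring
    _ ≤ _ := le_add_of_nonneg_right (by positivity)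

lemma tsum_le_three_mul_tsum_of_le_shifts {f g : ℕ → ℝ} (hf : Summable f) (hf0 : ∀ n, 0 ≤ f n)
    (hg0 : ∀ n, 0 ≤ g n) (hg_zero : g 0 = 0) (hg : ∀ m, g (m + 1) ≤ f m + f (m + 1) + f (m + 2)) :
    ∑' n, g n ≤ 3 * ∑' n, f n := by
  have hf1 : Summable fun n => f (n + 1) := (summable_nat_add_iff 1).2 hf
  have hf2 : Summable fun n => f (n + 2) := (summable_nat_add_iff 2).2 hf
  have hg1 : Summable fun m => g (m + 1) :=
    .of_nonneg_of_le (fun m => hg0 _) hg ((hf.add hf1).add hf2)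
  rw [((summable_nat_add_iff 1).1 hg1).tsum_eq_zero_add, hg_zero, zero_add]
  calc ∑' m, g (m + 1) ≤ ∑' m, (f m + f (m + 1) + f (m + 2)) :=
        hg1.tsum_le_tsum hg ((hf.add hf1).add hf2)
    _ = ∑' m, f m + ∑' m, f (m + 1) + ∑' m, f (m + 2) := by
        rw [(hf.add hf1).tsum_add hf2, hf.tsum_add hf1]
    _ ≤ 3 * ∑' n, f n := by
        have h1 : ∑' m, f (m + 1) ≤ ∑' n, f n :=
          tsum_comp_le_tsum_of_inj hf hf0 (add_left_injective 1)
        have h2 : ∑' m, f (m + 2) ≤ ∑' n, f n :=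
          tsum_comp_le_tsum_of_inj hf hf0 (add_left_injective 2)
        linarith

lemma summable_and_tsum_norm_mul_norm_le {a b : ℕ → ℂ} (ha : Summable fun n => ‖a n‖ ^ 2)
    (hb : Summable fun n => ‖b n‖ ^ 2) :
    (Summable fun n => ‖a n‖ * ‖b n‖) ∧ ∑' n, ‖a n‖ * ‖b n‖ ≤ l2norm a * l2norm b := by
  simpa only [Real.rpow_two, l2norm, Real.sqrt_eq_rpow] using
    Real.summable_and_inner_le_Lp_mul_Lq_tsum_of_nonneg .two_two (fun n => norm_nonneg (a n))
      (fun n => norm_nonneg (b n)) (by simpa only [Real.rpow_two] using ha)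
      (by simpa only [Real.rpow_two] using hb)

lemma summable_sq_norm_of_finite_support {b : ℕ → ℂ} (hb : (Function.support b).Finite) :
    Summable fun n => ‖b n‖ ^ 2 :=
  summable_of_hasFiniteSupport <| hb.subset <|
    Function.support_comp_subset (g := fun z : ℂ => ‖z‖ ^ 2) (by simp) b

lemma succ_cube_le_gHat_coeff (n : ℕ) : (n + 1) ^ 3 ≤ 27 * (n * (n - 1) * (n - 2) + 1) := by
  match n with
  | 0 | 1 | 2 => decide
  | k + 3 =>
    rw [show k + 3 - 1 = k + 2 by omega, show k + 3 - 2 = k + 1 by omega]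
    nlinarith [k.zero_le, sq_nonneg k]

lemma sq_mul_norm_le_norm_gHat_mul_norm {q s : ℝ} (hs : 0 ≤ s) (a : ℕ → ℂ) (n : ℕ)
    (hq : q ^ 2 ≤ s * ((n : ℝ) + 1) ^ 3) :
    (q * ‖a n‖) ^ 2 ≤ 27 * s * (‖gHat a n‖ * ‖a n‖) := by
  have hw : ((n : ℝ) + 1) ^ 3 ≤ 27 * ((n * (n - 1) * (n - 2) + 1 : ℕ) : ℝ) := by
    exact_mod_cast succ_cube_le_gHat_coeff n
  rw [gHat, norm_mul, Complex.norm_natCast, mul_pow]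
  calc q ^ 2 * ‖a n‖ ^ 2 ≤ s * ((n : ℝ) + 1) ^ 3 * ‖a n‖ ^ 2 := by gcongr
    _ ≤ s * (27 * ((n * (n - 1) * (n - 2) + 1 : ℕ) : ℝ)) * ‖a n‖ ^ 2 := by gcongr
    _ = _ := by ring

lemma norm_gribovH_succ_le (μ lam : ℝ) (a : ℕ → ℂ) (m : ℕ) :
    ‖gribovH μ lam a (m + 1)‖ ≤ |lam| * m * √(m + 1) * ‖a m‖ + |μ| * (m + 1) * ‖a (m + 1)‖
      + |lam| * (m + 1) * √(m + 2) * ‖a (m + 2)‖ := by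
  rw [gribovH, if_neg m.succ_ne_zero]
  refine norm_add₃_le.trans_eq ?_
  simp only [norm_mul, Complex.norm_I, Complex.norm_real, Complex.norm_natCast, Real.norm_eq_abs,
    abs_of_nonneg (Real.sqrt_nonneg _), Nat.add_sub_cancel, one_mul]
  push_cast
  ring_nf

lemma sq_norm_gribovH_succ_le (μ lam : ℝ) (a : ℕ → ℂ) (m : ℕ) :
    ‖gribovH μ lam a (m + 1)‖ ^ 2 ≤ 81 * (μ ^ 2 + lam ^ 2) * (‖gHat a m‖ * ‖a m‖
      + ‖gHat a (m + 1)‖ * ‖a (m + 1)‖ + ‖gHat a (m + 2)‖ * ‖a (m + 2)‖) := by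
  set s := μ ^ 2 + lam ^ 2
  have hs : 0 ≤ s := by positivity
  have hμ : μ ^ 2 ≤ s := le_add_of_nonneg_right (sq_nonneg lam)
  have hlam : lam ^ 2 ≤ s := le_add_of_nonneg_left (sq_nonneg μ)
  have hm : (0 : ℝ) ≤ m := m.cast_nonneg
  have hP := sq_mul_norm_le_norm_gHat_mul_norm hs a m (q := |lam| * m * √(m + 1)) (by
    rw [mul_pow, mul_pow, sq_abs, Real.sq_sqrt (by positivity), mul_assoc]
    exact mul_le_mul hlam (by nlinarith) (by positivity) hs)
  have hQ := sq_mul_norm_le_norm_gHat_mul_norm hs a (m + 1) (q := |μ| * (m + 1)) (by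
    rw [mul_pow, sq_abs]
    push_cast
    exact mul_le_mul hμ (by nlinarith) (by positivity) hs)
  have hR := sq_mul_norm_le_norm_gHat_mul_norm hs a (m + 2) (q := |lam| * (m + 1) * √(m + 2)) (by
    rw [mul_pow, mul_pow, sq_abs, Real.sq_sqrt (by positivity)]
    push_cast
    rw [mul_assoc]
    exact mul_le_mul hlam (by nlinarith) (by positivity) hs)
  have hsum := pow_le_pow_left₀ (norm_nonneg _) (norm_gribovH_succ_le μ lam a m) 2
  set P := |lam| * m * √(m + 1) * ‖a m‖
  set Q := |μ| * (m + 1) * ‖a (m + 1)‖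
  set R := |lam| * (m + 1) * √(m + 2) * ‖a (m + 2)‖
  nlinarith [sq_nonneg (P - Q), sq_nonneg (Q - R), sq_nonneg (P - R)]

lemma support_gHat_subset (a : ℕ → ℂ) : Function.support (gHat a) ⊆ Function.support a :=
  Function.support_mul_subset_right _ a

lemma l2norm_gribovH_le (μ lam : ℝ) {a : ℕ → ℂ} (ha : Summable fun n => ‖a n‖ ^ 2)
    (hGa : Summable fun n => ‖gHat a n‖ ^ 2) :
    l2norm (gribovH μ lam a) ≤ √(243 * (μ ^ 2 + lam ^ 2)) * √(l2norm (gHat a) * l2norm a) := by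
  obtain ⟨hsum, hCS⟩ := summable_and_tsum_norm_mul_norm_le hGa ha
  have hH := tsum_le_three_mul_tsum_of_le_shifts (hsum.mul_left (81 * (μ ^ 2 + lam ^ 2)))
    (fun n => by positivity) (fun n => sq_nonneg ‖gribovH μ lam a n‖) (by simp [gribovH])
    (fun m => by simpa only [mul_add] using sq_norm_gribovH_succ_le μ lam a m)
  rw [tsum_mul_left] at hH
  rw [l2norm, ← Real.sqrt_mul (by positivity)]
  gcongr
  calc _ ≤ _ := hH
    _ = 243 * (μ ^ 2 + lam ^ 2) * ∑' n, ‖gHat a n‖ * ‖a n‖ := by ring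
    _ ≤ _ := by gcongr

/-- For `3 ≤ β < 4` and every `ε > 0` there is `C_ε > 0` such that
`‖H_{μ,λ}a‖ ≤ ε·‖Ĝa‖^{2/β}·‖a‖^{1−2/β} + C_ε·‖a‖` for all finitely supported
sequences `a`. -/
theorem gribovH_subordinate_gHat_order (μ lam β : ℝ) (hβ1 : 3 ≤ β) (hβ2 : β < 4)
    (ε : ℝ) (hε : 0 < ε) :
    ∃ C > 0, ∀ a : ℕ → ℂ, (Function.support a).Finite →
      l2norm (gribovH μ lam a) ≤
        ε * (l2norm (gHat a)) ^ ((2 : ℝ) / β) * (l2norm a) ^ (1 - (2 : ℝ) / β)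
          + C * l2norm a := by
  have hp : 1 / 2 < 2 / β := by rw [lt_div_iff₀ (by linarith)]; linarith
  obtain ⟨C, hC, hinterp⟩ := exists_mul_sqrt_mul_le_rpow_mul_rpow_add hp
    (Real.sqrt_nonneg (243 * (μ ^ 2 + lam ^ 2))) hε
  refine ⟨C, hC, fun a ha => ?_⟩
  calc l2norm (gribovH μ lam a)
      ≤ √(243 * (μ ^ 2 + lam ^ 2)) * √(l2norm (gHat a) * l2norm a) :=
        l2norm_gribovH_le μ lam (summable_sq_norm_of_finite_support ha)
          (summable_sq_norm_of_finite_support (ha.subset (support_gHat_subset a)))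
    _ ≤ _ := hinterp _ _ (Real.sqrt_nonneg _) (Real.sqrt_nonneg _)
end
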